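/- arXiv:2009.04017 — 4 statements merged into one kernel-verified Lean document; each statement's English description precedes it below -/
import Mathlib

section
/- Let f : [0,1] → ℝ be a C² function with f'(0) = 0, f''(z) > 0 for all z ∈ [0,1], and ∫₀¹ f(z) dz = 0. Then ∫₀¹ f(z)² dz ≤ (1/3) f(1)². -/
/-!
Let `A t = f 1 * (2 t - 1)`, the affine function of mean zero that agrees with `f` at `1`.
Then `w = A - f` is concave with `w 1 = 0` and `∫ w = 0`, so `w` changes sign only once, at
some `a`, from nonpositive to nonnegative. As `A + f` is increasing, `w t * ((A + f) t - (A + f) a)`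
is pointwise nonnegative, whence `∫ (A² - f²) = ∫ w (A + f) ≥ (A + f) a * ∫ w = 0`, that is,
`∫ f² ≤ ∫ A² = f 1 ² / 3`.
-/

open Set intervalIntegral

section DerivWithin

variable {D : Set ℝ} {f f' f'' : ℝ → ℝ}

theorem Convex.monotoneOn_of_hasDerivWithinAt_nonneg (hD : Convex ℝ D)
    (hf : ∀ x ∈ D, HasDerivWithinAt f (f' x) D x) (hf'₀ : ∀ x ∈ D, 0 ≤ f' x) :
    MonotoneOn f D :=
  _root_.monotoneOn_of_hasDerivWithinAt_nonneg hD (fun x hx ↦ (hf x hx).continuousWithinAt)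
    (fun x hx ↦ (hf x (interior_subset hx)).mono interior_subset)
    (fun x hx ↦ hf'₀ x (interior_subset hx))

theorem Convex.convexOn_of_hasDerivWithinAt2_nonneg (hD : Convex ℝ D)
    (hf : ∀ x ∈ D, HasDerivWithinAt f (f' x) D x)
    (hf' : ∀ x ∈ D, HasDerivWithinAt f' (f'' x) D x) (hf''₀ : ∀ x ∈ D, 0 ≤ f'' x) :
    ConvexOn ℝ D f :=
  _root_.convexOn_of_hasDerivWithinAt2_nonneg hD (fun x hx ↦ (hf x hx).continuousWithinAt)
    (fun x hx ↦ (hf x (interior_subset hx)).mono interior_subset)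
    (fun x hx ↦ (hf' x (interior_subset hx)).mono interior_subset)
    (fun x hx ↦ hf''₀ x (interior_subset hx))

end DerivWithin

theorem ConcaveOn.exists_sign_change_Icc {w : ℝ → ℝ} {p q : ℝ} (hw : ConcaveOn ℝ (Icc p q) w)
    (hpq : p ≤ q) (hq : 0 ≤ w q) :
    ∃ a ∈ Icc p q, (∀ t ∈ Icc p q, t < a → w t ≤ 0) ∧ (∀ t ∈ Icc p q, a < t → 0 ≤ w t) := by
  set S := {t ∈ Icc p q | 0 ≤ w t}
  have hqS : q ∈ S := ⟨right_mem_Icc.2 hpq, hq⟩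
  have hS : BddBelow S := ⟨p, fun t ht ↦ ht.1.1⟩
  refine ⟨sInf S, ⟨le_csInf ⟨q, hqS⟩ fun t ht ↦ ht.1.1, csInf_le hS hqS⟩, ?_, ?_⟩
  · intro t ht hta
    by_contra! hwt
    exact (csInf_le hS ⟨ht, hwt.le⟩).not_gt hta
  · intro t ht hat
    obtain ⟨s, hs, hst⟩ := exists_lt_of_csInf_lt ⟨q, hqS⟩ hat
    exact (le_min hs.2 hq).trans (hw.min_le_of_mem_Icc hs.1 hqS.1 ⟨hst.le, ht.2⟩)

theorem integral_mul_const_le_integral_mul_of_monotoneOn {w g : ℝ → ℝ} {p q a : ℝ} (hpq : p ≤ q)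
    (ha : a ∈ Icc p q) (hneg : ∀ t ∈ Icc p q, t < a → w t ≤ 0)
    (hnonneg : ∀ t ∈ Icc p q, a < t → 0 ≤ w t) (hg : MonotoneOn g (Icc p q))
    (hw : IntervalIntegrable w MeasureTheory.volume p q)
    (hwg : IntervalIntegrable (fun t ↦ w t * g t) MeasureTheory.volume p q) :
    (∫ t in p..q, w t) * g a ≤ ∫ t in p..q, w t * g t := by
  rw [← integral_mul_const]
  refine integral_mono_on hpq (hw.mul_const _) hwg fun t ht ↦ ?_
  rcases lt_trichotomy t a with hta | rfl | hat
  · exact mul_le_mul_of_nonpos_left (hg ht ha hta.le) (hneg t ht hta)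
  · rfl
  · exact mul_le_mul_of_nonneg_left (hg ha ht hat.le) (hnonneg t ht hat)

theorem integral_const_mul_two_mul_sub_one (c : ℝ) : ∫ t in (0:ℝ)..1, c * (2 * t - 1) = 0 := by
  rw [integral_const_mul, integral_comp_mul_sub (fun x ↦ x) two_ne_zero]
  norm_num

theorem integral_sq_const_mul_two_mul_sub_one (c : ℝ) :
    ∫ t in (0:ℝ)..1, (c * (2 * t - 1)) ^ 2 = c ^ 2 / 3 := by
  simp_rw [mul_pow, integral_const_mul]
  rw [integral_comp_mul_sub (fun x ↦ x ^ 2) two_ne_zero]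
  norm_num [integral_pow]
  ring

theorem integral_sq_le_of_convexOn_of_monotoneOn {f : ℝ → ℝ} (hconv : ConvexOn ℝ (Icc 0 1) f)
    (hmono : MonotoneOn f (Icc 0 1)) (hcont : ContinuousOn f (Icc 0 1))
    (hint : ∫ t in (0:ℝ)..1, f t = 0) :
    ∫ t in (0:ℝ)..1, f t ^ 2 ≤ f 1 ^ 2 / 3 := by
  have h01 : (0:ℝ) ≤ 1 := zero_le_one
  set c := f 1
  set A : ℝ → ℝ := fun t ↦ c * (2 * t - 1)
  have hA_cont : ContinuousOn A (Icc 0 1) := by fun_prop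
  have hf_int : IntervalIntegrable f MeasureTheory.volume 0 1 := hcont.intervalIntegrable_of_Icc h01
  have hc : 0 ≤ c := by
    simpa [hint] using integral_mono_on h01 hf_int intervalIntegrable_const fun x hx ↦
      hmono hx (right_mem_Icc.2 h01) hx.2
  have hA_concave : ConcaveOn ℝ (Icc 0 1) A :=
    ⟨convex_Icc 0 1, fun x _ y _ a b _ _ hab ↦ by
      simp only [A, smul_eq_mul]; exact le_of_eq (by linear_combination (-c) * hab)⟩
  have hA_mono : MonotoneOn A (Icc 0 1) := fun x _ y _ hxy ↦ by simp only [A]; nlinarith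
  obtain ⟨a, ha, hneg, hnonneg⟩ :=
    (hA_concave.sub hconv).exists_sign_change_Icc h01 (by norm_num [A, c])
  have key := integral_mul_const_le_integral_mul_of_monotoneOn h01 ha hneg hnonneg
    (hA_mono.add hmono) ((hA_cont.sub hcont).intervalIntegrable_of_Icc h01)
    (((hA_cont.sub hcont).mul (hA_cont.add hcont)).intervalIntegrable_of_Icc h01)
  have hw_int : ∫ t in (0:ℝ)..1, (A - f) t = 0 := by
    simp only [Pi.sub_apply]
    rw [integral_sub (hA_cont.intervalIntegrable_of_Icc h01) hf_int, hint,
      integral_const_mul_two_mul_sub_one, sub_zero]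
  have hwg_int : ∫ t in (0:ℝ)..1, (A - f) t * (A t + f t) =
      c ^ 2 / 3 - ∫ t in (0:ℝ)..1, f t ^ 2 := by
    have hA2 : IntervalIntegrable (fun t ↦ A t ^ 2) MeasureTheory.volume 0 1 :=
      (hA_cont.pow 2).intervalIntegrable_of_Icc h01
    have hf2 : IntervalIntegrable (fun t ↦ f t ^ 2) MeasureTheory.volume 0 1 :=
      (hcont.pow 2).intervalIntegrable_of_Icc h01
    simp only [Pi.sub_apply, mul_comm (A _ - f _), ← sq_sub_sq]
    rw [integral_sub hA2 hf2, integral_sq_const_mul_two_mul_sub_one]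
  rw [hw_int, hwg_int, zero_mul] at key
  linarith

theorem convex_lemma_inequality_general
    (f f' f'' : ℝ → ℝ)
    (hf' : ∀ z ∈ Set.Icc (0:ℝ) 1, HasDerivWithinAt f (f' z) (Set.Icc 0 1) z)
    (hf'' : ∀ z ∈ Set.Icc (0:ℝ) 1, HasDerivWithinAt f' (f'' z) (Set.Icc 0 1) z)
    (h0 : f' 0 = 0)
    (hpos : ∀ z ∈ Set.Icc (0:ℝ) 1, 0 < f'' z)
    (hint : ∫ z in (0:ℝ)..1, f z = 0) :
    ∫ z in (0:ℝ)..1, (f z) ^ 2 ≤ (1/3) * (f 1) ^ 2 := by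
  have hf'_mono : MonotoneOn f' (Icc 0 1) :=
    (convex_Icc 0 1).monotoneOn_of_hasDerivWithinAt_nonneg hf'' fun x hx ↦ (hpos x hx).le
  have hf_mono : MonotoneOn f (Icc 0 1) :=
    (convex_Icc 0 1).monotoneOn_of_hasDerivWithinAt_nonneg hf' fun x hx ↦
      h0 ▸ hf'_mono (left_mem_Icc.2 zero_le_one) hx hx.1
  have hf_convex : ConvexOn ℝ (Icc 0 1) f :=
    (convex_Icc 0 1).convexOn_of_hasDerivWithinAt2_nonneg hf' hf'' fun x hx ↦ (hpos x hx).le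
  rw [one_div_mul_eq_div]
  exact integral_sq_le_of_convexOn_of_monotoneOn hf_convex hf_mono
    (fun x hx ↦ (hf' x hx).continuousWithinAt) hint

/-- If `f` is C² on `[0,1]` with `f'(0) = 0`, `f'' > 0` on `[0,1]`,
and `∫₀¹ f = 0`, then `∫₀¹ f² ≤ (1/3) f(1)²`. -/
theorem convex_lemma_inequality
    (f f' f'' : ℝ → ℝ)
    (hf' : ∀ z ∈ Set.Icc (0:ℝ) 1, HasDerivWithinAt f (f' z) (Set.Icc 0 1) z)
    (hf'' : ∀ z ∈ Set.Icc (0:ℝ) 1, HasDerivWithinAt f' (f'' z) (Set.Icc 0 1) z)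
    (hcont : ContinuousOn f'' (Set.Icc 0 1))
    (h0 : f' 0 = 0)
    (hpos : ∀ z ∈ Set.Icc (0:ℝ) 1, 0 < f'' z)
    (hint : ∫ z in (0:ℝ)..1, f z = 0) :
    ∫ z in (0:ℝ)..1, (f z) ^ 2 ≤ (1/3) * (f 1) ^ 2 :=
  convex_lemma_inequality_general f f' f'' hf' hf'' h0 hpos hint
end

section
/- Suppose W solves W_{tz} − (W_z)² + W W_{zz} + 2∫₀¹ W_z(t,s)² ds = 0 for (t,z) ∈ [0,T) × [0,1] with W(t,0) = W(t,1) = 0, W is smooth, and for each t the function z ↦ W_z(t,z) satisfies ∂_z W_z(t,0) = 0 and ∂_{zz} W_z(t,z) > 0 on [0,1]. If W_z(0,1) > 0, then W_z(t,1) ≥ 3 W_z(0,1)/(3 − W_z(0,1) t) for all t ∈ [0,T), and hence T ≤ 3/W_z(0,1). -/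
open Set

open Set intervalIntegral MeasureTheory

set_option maxHeartbeats 1000000 in
/-- Convexity lemma: if `g` is smooth with `g'(0) = 0`, `g'' > 0` on `[0,1]`, and
`∫₀¹ g = 0`, then `∫₀¹ g² ≤ g(1)²/3`. -/
lemma key_convexity (g : ℝ → ℝ) (hg : ContDiff ℝ ((⊤:ℕ∞) : WithTop ℕ∞) g)
    (h10 : deriv g 0 = 0)
    (h2 : ∀ z ∈ Icc (0:ℝ) 1, 0 < deriv (deriv g) z)
    (hmean : (∫ s in (0:ℝ)..1, g s) = 0) :
    (∫ s in (0:ℝ)..1, (g s)^2) ≤ (g 1)^2 / 3 := by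
  have hg1 : ContDiff ℝ ((⊤:ℕ∞) : WithTop ℕ∞) (deriv g) := (contDiff_infty_iff_deriv.mp hg).2
  have hg2 : ContDiff ℝ ((⊤:ℕ∞) : WithTop ℕ∞) (deriv (deriv g)) := (contDiff_infty_iff_deriv.mp hg1).2
  have hgc : Continuous g := hg.continuous
  have hg1c : Continuous (deriv g) := hg1.continuous
  have hg2c : Continuous (deriv (deriv g)) := hg2.continuous
  have hgd : ∀ x : ℝ, HasDerivAt g (deriv g x) x :=
    fun x => (hg.differentiable (by simp) x).hasDerivAt
  have hg1d : ∀ x : ℝ, HasDerivAt (deriv g) (deriv (deriv g) x) x :=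
    fun x => (hg1.differentiable (by simp) x).hasDerivAt
  -- g' is strictly monotone on [0,1], hence nonnegative there
  have hg'mono : StrictMonoOn (deriv g) (Icc 0 1) := by
    apply strictMonoOn_of_deriv_pos (convex_Icc 0 1) hg1c.continuousOn
    intro x hx
    rw [interior_Icc] at hx
    exact h2 x (Ioo_subset_Icc_self hx)
  have hg'nonneg : ∀ z ∈ Icc (0:ℝ) 1, 0 ≤ deriv g z := by
    intro z hz
    rcases eq_or_lt_of_le hz.1 with h | h
    · rw [← h, h10]
    · have := hg'mono (left_mem_Icc.mpr zero_le_one) hz h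
      rw [h10] at this; exact this.le
  -- g is monotone on [0,1]
  have hgmono : MonotoneOn g (Icc 0 1) := by
    apply monotoneOn_of_deriv_nonneg (convex_Icc 0 1) hgc.continuousOn
    · exact fun x hx => ((hg.differentiable (by simp)) x).differentiableWithinAt
    · intro x hx
      rw [interior_Icc] at hx
      exact hg'nonneg x (Ioo_subset_Icc_self hx)
  set M : ℝ := g 1 with hM
  set G : ℝ → ℝ := fun z => ∫ x in (0:ℝ)..z, g x with hGdef
  have hGd : ∀ x : ℝ, HasDerivAt G (g x) x :=
    fun x => (hgc.integral_hasStrictDerivAt 0 x).hasDerivAt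
  have hGc : Continuous G := by
    rw [continuous_iff_continuousAt]; exact fun x => (hGd x).continuousAt
  set H : ℝ → ℝ := fun s => ∫ x in (1:ℝ)..s, G x with hHdef
  have hHd : ∀ x : ℝ, HasDerivAt H (G x) x :=
    fun x => (hGc.integral_hasStrictDerivAt 1 x).hasDerivAt
  have hHc : Continuous H := by
    rw [continuous_iff_continuousAt]; exact fun x => (hHd x).continuousAt
  have hG0 : G 0 = 0 := intervalIntegral.integral_same
  have hG1 : G 1 = 0 := hmean
  have hH1 : H 1 = 0 := intervalIntegral.integral_same
  -- φ and its derivative φ₁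
  set φ1 : ℝ → ℝ := fun s => -M * s - 3 * G s with hφ1def
  set φ : ℝ → ℝ := fun s => M * (1 - s^2) / 2 - 3 * H s with hφdef
  have hφd : ∀ x : ℝ, HasDerivAt φ (φ1 x) x := by
    intro x
    have h1 : HasDerivAt (fun s : ℝ => M * (1 - s^2) / 2) (-M * x) x := by
      have h2 : HasDerivAt (fun s : ℝ => 1 - s^2) (0 - 2 * x) x := by
        have := (hasDerivAt_pow 2 x)
        have := (hasDerivAt_const x (1:ℝ)).sub (hasDerivAt_pow 2 x)
        exact this.congr_deriv (by push_cast; ring)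
      have := (h2.const_mul M).div_const 2
      exact this.congr_deriv (by ring)
    have := h1.sub ((hHd x).const_mul 3)
    exact this.congr_deriv (by simp only [hφ1def])
  have hφ1d : ∀ x : ℝ, HasDerivAt φ1 (-M - 3 * g x) x := by
    intro x
    have h1 : HasDerivAt (fun s : ℝ => -M * s) (-M) x := by
      simpa using (hasDerivAt_id x).const_mul (-M)
    have := h1.sub ((hGd x).const_mul 3)
    exact this.congr_deriv (by ring)
  have hφ1c : Continuous φ1 := by
    rw [continuous_iff_continuousAt]; exact fun x => (hφ1d x).continuousAt
  have hφc : Continuous φ := by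
    rw [continuous_iff_continuousAt]; exact fun x => (hφd x).continuousAt
  have hφ10 : φ1 0 = 0 := by simp [hφ1def, hG0]
  have hφat1 : φ 1 = 0 := by simp [hφdef, hH1]
  -- φ₁ is concave on [0,1]
  have hφ1conc : ConcaveOn ℝ (Icc (0:ℝ) 1) φ1 := by
    apply concaveOn_of_deriv2_nonpos (convex_Icc 0 1) hφ1c.continuousOn
    · exact fun x _ => (hφ1d x).differentiableAt.differentiableWithinAt
    · have : deriv φ1 = fun x => -M - 3 * g x := funext fun x => (hφ1d x).deriv
      rw [this]
      intro x _
      exact ((((hg.differentiable (by simp)).const_mul 3).const_sub (-M)) x).differentiableWithinAt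
    · intro x hx
      rw [interior_Icc] at hx
      have hd1 : deriv φ1 = fun x => -M - 3 * g x := funext fun x => (hφ1d x).deriv
      have : deriv^[2] φ1 x = deriv (fun x => -M - 3 * g x) x := by
        simp [Function.iterate_succ, hd1]
      rw [this]
      have : HasDerivAt (fun x => -M - 3 * g x) (-(3 * deriv g x)) x := by
        simpa using ((hgd x).const_mul 3).const_sub (-M)
      rw [this.deriv]
      have := hg'nonneg x (Ioo_subset_Icc_self hx)
      linarith
  
  -- derivative of (1 - s^2)/2 and (s^2 - 1)/2
  have hu' : ∀ x : ℝ, HasDerivAt (fun s : ℝ => (1 - s^2)/2) (-x) x := by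
    intro x
    have h := ((hasDerivAt_const x (1:ℝ)).sub (hasDerivAt_pow 2 x)).div_const 2
    exact h.congr_deriv (by push_cast; ring)
  have hv' : ∀ x : ℝ, HasDerivAt (fun s : ℝ => (s^2 - 1)/2) x x := by
    intro x
    have h := ((hasDerivAt_pow 2 x).sub_const 1).div_const 2
    exact h.congr_deriv (by push_cast; ring)
  -- continuity helpers
  have hwc : Continuous (fun x : ℝ => 3*x^2 - 2*x) :=
    (continuous_const.mul (continuous_pow 2)).sub (continuous_const.mul continuous_id)
  have hc_i2 : Continuous (fun x : ℝ => deriv g x * (x - 1)) :=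
    hg1c.mul (continuous_id.sub continuous_const)
  have hc_i3 : Continuous (fun x : ℝ => deriv g x * ((x^2 - 1)/2)) :=
    hg1c.mul (((continuous_pow 2).sub continuous_const).div_const 2)
  -- Chebyshev-type inequality
  have hcheb : 0 ≤ ∫ x in (0:ℝ)..1, (deriv g x - deriv g (2/3)) * (3*x^2 - 2*x) := by
    apply intervalIntegral.integral_nonneg zero_le_one
    intro u hu
    rcases le_total u (2/3 : ℝ) with h | h
    · have h1 : deriv g u ≤ deriv g (2/3) := hg'mono.monotoneOn hu (by norm_num) h
      have h2 : 3*u^2 - 2*u ≤ 0 := by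
        nlinarith [mul_nonneg hu.1 (by linarith : (0:ℝ) ≤ 2 - 3*u)]
      nlinarith [mul_nonneg (by linarith : (0:ℝ) ≤ deriv g (2/3) - deriv g u)
        (by linarith : (0:ℝ) ≤ -(3*u^2 - 2*u))]
    · have h1 : deriv g (2/3) ≤ deriv g u := hg'mono.monotoneOn (by norm_num) hu h
      have h2 : 0 ≤ 3*u^2 - 2*u := by
        nlinarith [mul_nonneg (by linarith : (0:ℝ) ≤ u) (by linarith : (0:ℝ) ≤ 3*u - 2)]
      nlinarith [mul_nonneg (by linarith : (0:ℝ) ≤ deriv g u - deriv g (2/3)) h2]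
  have hw0 : (∫ x in (0:ℝ)..1, (3*x^2 - 2*x)) = 0 := by
    have hiA : IntervalIntegrable (fun x : ℝ => 3 * x^2) MeasureTheory.volume 0 1 :=
      (continuous_const.mul (continuous_pow 2)).intervalIntegrable 0 1
    have hiB : IntervalIntegrable (fun x : ℝ => 2 * x) MeasureTheory.volume 0 1 :=
      (continuous_const.mul continuous_id).intervalIntegrable 0 1
    rw [intervalIntegral.integral_sub hiA hiB,
      intervalIntegral.integral_const_mul, intervalIntegral.integral_const_mul,
      integral_pow, integral_id]
    norm_num
  have hsplitw : (∫ x in (0:ℝ)..1, (deriv g x - deriv g (2/3)) * (3*x^2 - 2*x))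
      = (∫ x in (0:ℝ)..1, deriv g x * (3*x^2 - 2*x))
        - deriv g (2/3) * (∫ x in (0:ℝ)..1, (3*x^2 - 2*x)) := by
    have hiA : IntervalIntegrable (fun x : ℝ => deriv g x * (3*x^2 - 2*x)) MeasureTheory.volume 0 1 :=
      (hg1c.mul hwc).intervalIntegrable 0 1
    have hiB : IntervalIntegrable (fun x : ℝ => deriv g (2/3) * (3*x^2 - 2*x)) MeasureTheory.volume 0 1 :=
      (continuous_const.mul hwc).intervalIntegrable 0 1
    rw [← intervalIntegral.integral_const_mul, ← intervalIntegral.integral_sub hiA hiB]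
    apply intervalIntegral.integral_congr
    intro x _
    ring
  have hI4 : 0 ≤ (∫ x in (0:ℝ)..1, deriv g x * (3*x^2 - 2*x)) := by
    rw [hsplitw, hw0] at hcheb
    linarith
  have hcomb4 : (∫ x in (0:ℝ)..1, deriv g x * (3*x^2 - 2*x))
      = (∫ x in (0:ℝ)..1, (deriv g x - 2 * (deriv g x * (x-1)) + 6 * (deriv g x * ((x^2-1)/2)))) := by
    apply intervalIntegral.integral_congr
    intro x _
    ring
  have hiC2 : IntervalIntegrable (fun x : ℝ => 2 * (deriv g x * (x-1))) MeasureTheory.volume 0 1 :=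
    (continuous_const.mul hc_i2).intervalIntegrable 0 1
  have hiA4 : IntervalIntegrable (fun x : ℝ => deriv g x - 2 * (deriv g x * (x-1))) MeasureTheory.volume 0 1 :=
    (hg1c.sub (continuous_const.mul hc_i2)).intervalIntegrable 0 1
  have hiB4 : IntervalIntegrable (fun x : ℝ => 6 * (deriv g x * ((x^2-1)/2))) MeasureTheory.volume 0 1 :=
    (continuous_const.mul hc_i3).intervalIntegrable 0 1
  rw [intervalIntegral.integral_add hiA4 hiB4,
      intervalIntegral.integral_sub (hg1c.intervalIntegrable 0 1) hiC2,
      intervalIntegral.integral_const_mul, intervalIntegral.integral_const_mul] at hcomb4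
  -- integration by parts identities
  have e3 : (∫ x in (0:ℝ)..1, 1 * g x) = 0 := by
    simp only [one_mul]; exact hmean
  have e3R : (∫ x in (0:ℝ)..1, g x * 1) = 0 := by
    simp only [mul_one]; exact hmean
  have hd : (∫ x in (0:ℝ)..1, deriv g x) = g 1 - g 0 :=
    integral_deriv_eq_sub (fun x _ => hg.differentiable (by simp) x)
      (hg1c.intervalIntegrable 0 1)
  have hIa : (∫ x in (0:ℝ)..1, G x * 1) = G 1 * 1 - G 0 * 0 - ∫ x in (0:ℝ)..1, g x * x :=
    integral_mul_deriv_eq_deriv_mul (fun x _ => hGd x) (fun x _ => hasDerivAt_id x)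
      (hgc.intervalIntegrable 0 1) (continuous_const.intervalIntegrable 0 1)
  have hIb : (∫ x in (0:ℝ)..1, g x * x)
      = g 1 * ((1^2-1)/2) - g 0 * ((0^2-1)/2) - ∫ x in (0:ℝ)..1, deriv g x * ((x^2-1)/2) :=
    integral_mul_deriv_eq_deriv_mul (fun x _ => hgd x) (fun x _ => hv' x)
      (hg1c.intervalIntegrable 0 1) (continuous_id.intervalIntegrable 0 1)
  have hIc : (∫ x in (0:ℝ)..1, g x * 1)
      = g 1 * (1-1) - g 0 * (0-1) - ∫ x in (0:ℝ)..1, deriv g x * (x-1) :=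
    integral_mul_deriv_eq_deriv_mul (fun x _ => hgd x)
      (fun x _ => (hasDerivAt_id x).sub_const 1)
      (hg1c.intervalIntegrable 0 1) (continuous_const.intervalIntegrable 0 1)
  -- positivity of φ at 0
  have hφ0 : 0 ≤ φ 0 := by
    have e1 : H 0 = - ∫ x in (0:ℝ)..1, G x := intervalIntegral.integral_symm 0 1
    have e2 : (∫ x in (0:ℝ)..1, G x) = ∫ x in (0:ℝ)..1, G x * 1 := by simp
    rw [hG0, hG1] at hIa
    have egoal : φ 0 = M * (1 - 0^2)/2 - 3 * H 0 := rfl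
    rw [egoal, e1, e2]
    rw [e3R] at hIc
    linarith [hIa, hIb, hIc, hd, hI4, hcomb4, hM]
  -- nonnegativity of φ on [0,1]
  have hφnn : ∀ s ∈ Icc (0:ℝ) 1, 0 ≤ φ s := by
    intro s hs
    by_cases hsign : 0 ≤ φ1 s
    · have hmono : MonotoneOn φ (Icc 0 s) := by
        apply monotoneOn_of_deriv_nonneg (convex_Icc 0 s) hφc.continuousOn
          (fun x _ => (hφd x).differentiableAt.differentiableWithinAt)
        intro x hx
        rw [interior_Icc] at hx
        rw [(hφd x).deriv]
        have hs0 : 0 < s := lt_trans hx.1 hx.2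
        have ha : 0 ≤ 1 - x/s := by
          have : x/s ≤ 1 := (div_le_one hs0).mpr hx.2.le
          linarith
        have hb : 0 ≤ x/s := div_nonneg hx.1.le hs0.le
        have hab : (1 - x/s) + x/s = 1 := by ring
        have hcomb := hφ1conc.2 (left_mem_Icc.mpr zero_le_one) hs ha hb hab
        rw [smul_eq_mul, smul_eq_mul, smul_eq_mul, smul_eq_mul, hφ10] at hcomb
        have hx' : (1 - x/s) * 0 + (x/s) * s = x := by field_simp; ring
        rw [hx'] at hcomb
        have h1 : 0 ≤ (x/s) * φ1 s := mul_nonneg hb hsign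
        calc (0:ℝ) ≤ (x/s) * φ1 s := h1
          _ = (1 - x/s) * 0 + x/s * φ1 s := by ring
          _ ≤ φ1 x := hcomb
      have := hmono ⟨le_rfl, hs.1⟩ ⟨hs.1, le_rfl⟩ hs.1
      linarith
    · push_neg at hsign
      have hs0 : 0 < s := by
        rcases eq_or_lt_of_le hs.1 with h | h
        · exfalso; rw [← h, hφ10] at hsign; exact lt_irrefl 0 hsign
        · exact h
      have hanti : AntitoneOn φ (Icc s 1) := by
        apply antitoneOn_of_deriv_nonpos (convex_Icc s 1) hφc.continuousOn
          (fun x _ => (hφd x).differentiableAt.differentiableWithinAt)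
        intro x hx
        rw [interior_Icc] at hx
        rw [(hφd x).deriv]
        by_contra hpos
        push_neg at hpos
        have hx0 : 0 < x := lt_trans hs0 hx.1
        have hxI : x ∈ Icc (0:ℝ) 1 := ⟨hx0.le, hx.2.le⟩
        have ha : 0 ≤ 1 - s/x := by
          have : s/x ≤ 1 := (div_le_one hx0).mpr hx.1.le
          linarith
        have hb : 0 ≤ s/x := div_nonneg hs0.le hx0.le
        have hab : (1 - s/x) + s/x = 1 := by ring
        have hcomb := hφ1conc.2 (left_mem_Icc.mpr zero_le_one) hxI ha hb hab
        rw [smul_eq_mul, smul_eq_mul, smul_eq_mul, smul_eq_mul, hφ10] at hcomb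
        have hs' : (1 - s/x) * 0 + (s/x) * x = s := by field_simp; ring
        rw [hs'] at hcomb
        have h1 : 0 < (s/x) * φ1 x := mul_pos (div_pos hs0 hx0) hpos
        have h2 : (0:ℝ) < φ1 s := by
          calc (0:ℝ) < (s/x) * φ1 x := h1
            _ = (1 - s/x) * 0 + s/x * φ1 x := by ring
            _ ≤ φ1 s := hcomb
        exact absurd h2 (not_lt.mpr hsign.le)
      have := hanti ⟨le_rfl, hs.2⟩ ⟨hs.2, le_rfl⟩ hs.2
      rw [hφat1] at this
      linarith
  -- final assembly
  have hnn : 0 ≤ ∫ x in (0:ℝ)..1, deriv (deriv g) x * φ x :=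
    intervalIntegral.integral_nonneg zero_le_one
      (fun u hu => mul_nonneg (h2 u hu).le (hφnn u hu))
  have hB : (∫ x in (0:ℝ)..1, G x * deriv g x)
      = G 1 * g 1 - G 0 * g 0 - ∫ x in (0:ℝ)..1, g x * g x :=
    integral_mul_deriv_eq_deriv_mul (fun x _ => hGd x) (fun x _ => hgd x)
      (hgc.intervalIntegrable 0 1) (hg1c.intervalIntegrable 0 1)
  have hC : (∫ x in (0:ℝ)..1, H x * deriv (deriv g) x)
      = H 1 * deriv g 1 - H 0 * deriv g 0 - ∫ x in (0:ℝ)..1, G x * deriv g x :=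
    integral_mul_deriv_eq_deriv_mul (fun x _ => hHd x) (fun x _ => hg1d x)
      (hGc.intervalIntegrable 0 1) (hg2c.intervalIntegrable 0 1)
  have hDpre : (∫ x in (0:ℝ)..1, (1-x^2)/2 * deriv (deriv g) x)
      = (1-1^2)/2 * deriv g 1 - (1-0^2)/2 * deriv g 0 - ∫ x in (0:ℝ)..1, -x * deriv g x :=
    integral_mul_deriv_eq_deriv_mul (fun x _ => hu' x) (fun x _ => hg1d x)
      (continuous_id.neg.intervalIntegrable 0 1) (hg2c.intervalIntegrable 0 1)
  have hDneg : (∫ x in (0:ℝ)..1, -x * deriv g x) = - ∫ x in (0:ℝ)..1, x * deriv g x := by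
    rw [← intervalIntegral.integral_neg]
    apply intervalIntegral.integral_congr
    intro x _
    ring
  have hE : (∫ x in (0:ℝ)..1, x * deriv g x) = 1 * g 1 - 0 * g 0 - ∫ x in (0:ℝ)..1, 1 * g x :=
    integral_mul_deriv_eq_deriv_mul (fun x _ => hasDerivAt_id x) (fun x _ => hgd x)
      (continuous_const.intervalIntegrable 0 1) (hg1c.intervalIntegrable 0 1)
  have hsplit2 : (∫ x in (0:ℝ)..1, deriv (deriv g) x * φ x)
      = M * (∫ x in (0:ℝ)..1, (1-x^2)/2 * deriv (deriv g) x)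
        - 3 * (∫ x in (0:ℝ)..1, H x * deriv (deriv g) x) := by
    have hiA2 : IntervalIntegrable (fun x : ℝ => M * ((1-x^2)/2 * deriv (deriv g) x)) MeasureTheory.volume 0 1 :=
      (continuous_const.mul (((continuous_const.sub (continuous_pow 2)).div_const 2).mul hg2c)).intervalIntegrable 0 1
    have hiB2 : IntervalIntegrable (fun x : ℝ => 3 * (H x * deriv (deriv g) x)) MeasureTheory.volume 0 1 :=
      (continuous_const.mul (hHc.mul hg2c)).intervalIntegrable 0 1
    rw [← intervalIntegral.integral_const_mul, ← intervalIntegral.integral_const_mul,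
        ← intervalIntegral.integral_sub hiA2 hiB2]
    apply intervalIntegral.integral_congr
    intro x _
    simp only [hφdef]
    ring
  have hDval : (∫ x in (0:ℝ)..1, (1-x^2)/2 * deriv (deriv g) x) = M := by
    rw [h10] at hDpre
    rw [e3] at hE
    rw [hDneg, hE] at hDpre
    rw [hDpre, hM]
    norm_num
  have hCval : (∫ x in (0:ℝ)..1, H x * deriv (deriv g) x) = ∫ x in (0:ℝ)..1, g x * g x := by
    rw [hH1, h10] at hC
    rw [hG0, hG1] at hB
    rw [hB] at hC
    rw [hC]
    ring
  rw [hsplit2, hDval, hCval] at hnn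
  have hgg : (∫ s in (0:ℝ)..1, (g s)^2) = ∫ x in (0:ℝ)..1, g x * g x := by
    apply intervalIntegral.integral_congr
    intro x _
    ring
  rw [hgg]
  nlinarith [hnn]

set_option maxHeartbeats 1000000 in
/-- Blowup for the reduced hydrostatic Euler equation: under the convexity
conditions on `W_z`, if `W_z(0,1) > 0` then `W_z(t,1)` satisfies the Riccati
lower bound and the smooth solution cannot exist past time `3/W_z(0,1)`. -/
theorem reduced_blowup
    (T : ℝ) (hT : 0 < T) (W : ℝ → ℝ → ℝ)
    (hsmooth : ContDiff ℝ (⊤ : ℕ∞) (Function.uncurry W))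
    (hpde : ∀ t ∈ Set.Ico (0:ℝ) T, ∀ z ∈ Set.Icc (0:ℝ) 1,
      deriv (fun t' => deriv (W t') z) t
        - (deriv (W t) z) ^ 2
        + W t z * deriv (deriv (W t)) z
        + 2 * (∫ s in (0:ℝ)..1, (deriv (W t) s) ^ 2) = 0)
    (hbc : ∀ t ∈ Set.Ico (0:ℝ) T, W t 0 = 0 ∧ W t 1 = 0)
    (hconv0 : ∀ t ∈ Set.Ico (0:ℝ) T, deriv (deriv (W t)) 0 = 0)
    (hconv : ∀ t ∈ Set.Ico (0:ℝ) T, ∀ z ∈ Set.Icc (0:ℝ) 1,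
      0 < deriv (deriv (deriv (W t))) z)
    (h0 : 0 < deriv (W 0) 1) :
    (∀ t ∈ Set.Ico (0:ℝ) T,
        3 * deriv (W 0) 1 / (3 - deriv (W 0) 1 * t) ≤ deriv (W t) 1) ∧
      T ≤ 3 / deriv (W 0) 1 := by
  
  have hsm : ContDiff ℝ ((⊤:ℕ∞) : WithTop ℕ∞) (Function.uncurry W) := hsmooth.of_le (by simp)
  have hWt : ∀ t : ℝ, ContDiff ℝ ((⊤:ℕ∞) : WithTop ℕ∞) (W t) := by
    intro t
    have h : (W t) = (Function.uncurry W) ∘ (fun z : ℝ => (t, z)) := rfl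
    rw [h]
    exact hsm.comp (contDiff_const.prodMk contDiff_id)
  -- smoothness of t ↦ W_z(t,1)
  have hF : ∀ t z : ℝ, deriv (W t) z = fderiv ℝ (Function.uncurry W) (t, z) (0, 1) := by
    intro t z
    have h1 : HasDerivAt (fun z : ℝ => ((t : ℝ), z)) (((0:ℝ), (1:ℝ))) z :=
      (hasDerivAt_const z t).prodMk (hasDerivAt_id z)
    have h2 : HasFDerivAt (Function.uncurry W) (fderiv ℝ (Function.uncurry W) (t, z)) (t, z) :=
      (hsm.differentiable (by simp) (t, z)).hasFDerivAt
    have h3 := h2.comp_hasDerivAt z h1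
    exact h3.deriv
  have hFd : ContDiff ℝ ((⊤:ℕ∞) : WithTop ℕ∞) (fderiv ℝ (Function.uncurry W)) :=
    hsmooth.fderiv_right (by simp)
  have hFc : ContDiff ℝ ((⊤:ℕ∞) : WithTop ℕ∞)
      (fun p : ℝ × ℝ => fderiv ℝ (Function.uncurry W) p (0, 1)) :=
    hFd.clm_apply contDiff_const
  have hfC : ContDiff ℝ ((⊤:ℕ∞) : WithTop ℕ∞) (fun t : ℝ => deriv (W t) 1) := by
    have h : (fun t : ℝ => deriv (W t) 1)
        = fun t : ℝ => fderiv ℝ (Function.uncurry W) (t, 1) (0, 1) := funext fun t => hF t 1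
    rw [h]
    exact hFc.comp (contDiff_id.prodMk contDiff_const)
  have hfd : Differentiable ℝ (fun t : ℝ => deriv (W t) 1) :=
    hfC.differentiable (by simp)
  have hfc : Continuous (fun t : ℝ => deriv (W t) 1) := hfC.continuous
  -- the convexity lemma applied at each time
  have hIle : ∀ t ∈ Set.Ico (0:ℝ) T,
      (∫ s in (0:ℝ)..1, (deriv (W t) s)^2) ≤ (deriv (W t) 1)^2 / 3 := by
    intro t ht
    apply key_convexity (deriv (W t))
    · exact (contDiff_infty_iff_deriv.mp (hWt t)).2
    · exact hconv0 t ht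
    · exact hconv t ht
    · have h := intervalIntegral.integral_deriv_eq_sub (f := W t)
        (fun x _ => ((hWt t).differentiable (by simp) x))
        (((contDiff_infty_iff_deriv.mp (hWt t)).2.continuous).intervalIntegrable 0 1)
      rw [(hbc t ht).1, (hbc t ht).2] at h
      simpa using h
  -- Riccati inequality for f(t) = W_z(t,1)
  have hderiv : ∀ t ∈ Set.Ico (0:ℝ) T,
      (deriv (W t) 1)^2 / 3 ≤ deriv (fun t' => deriv (W t') 1) t := by
    intro t ht
    have hE := hpde t ht 1 ⟨zero_le_one, le_rfl⟩
    rw [(hbc t ht).2] at hE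
    simp only [zero_mul, add_zero] at hE
    have hI := hIle t ht
    linarith
  have hf0 : ∀ t ∈ Set.Ico (0:ℝ) T, 0 ≤ deriv (fun t' => deriv (W t') 1) t := by
    intro t ht
    refine le_trans ?_ (hderiv t ht)
    positivity
  have hmonof : MonotoneOn (fun t' => deriv (W t') 1) (Set.Ico 0 T) := by
    apply monotoneOn_of_deriv_nonneg (convex_Ico 0 T) hfc.continuousOn
      (fun x _ => (hfd x).differentiableWithinAt)
    intro x hx
    rw [interior_Ico] at hx
    exact hf0 x (Ioo_subset_Ico_self hx)
  have h0mem : (0:ℝ) ∈ Set.Ico (0:ℝ) T := ⟨le_rfl, hT⟩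
  have hfpos : ∀ t ∈ Set.Ico (0:ℝ) T, 0 < deriv (W t) 1 := by
    intro t ht
    have h := hmonof h0mem ht ht.1
    simp only at h
    exact lt_of_lt_of_le h0 h
  -- the auxiliary decreasing function ψ
  set ψ : ℝ → ℝ := fun t => (deriv (W t) 1)⁻¹ + t/3 with hψdef
  have hψd : ∀ t ∈ Set.Ico (0:ℝ) T,
      HasDerivAt ψ (-(deriv (fun t' => deriv (W t') 1) t) / (deriv (W t) 1)^2 + 1/3) t := by
    intro t ht
    have h1 : HasDerivAt (fun t' => deriv (W t') 1) (deriv (fun t' => deriv (W t') 1) t) t :=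
      (hfd t).hasDerivAt
    have h2 := h1.inv (ne_of_gt (hfpos t ht))
    have h3 : HasDerivAt (fun t' : ℝ => t'/3) (1/3) t := by
      simpa using (hasDerivAt_id t).div_const 3
    exact h2.add h3
  have hψanti : AntitoneOn ψ (Set.Ico 0 T) := by
    apply antitoneOn_of_deriv_nonpos (convex_Ico 0 T)
    · apply ContinuousOn.add
      · exact hfc.continuousOn.inv₀ (fun t ht => ne_of_gt (hfpos t ht))
      · exact (continuous_id.div_const 3).continuousOn
    · intro x hx
      rw [interior_Ico] at hx
      exact ((hψd x (Ioo_subset_Ico_self hx)).differentiableAt).differentiableWithinAt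
    · intro x hx
      rw [interior_Ico] at hx
      have hxm := Ioo_subset_Ico_self hx
      rw [(hψd x hxm).deriv]
      have h1 := hderiv x hxm
      have h3 : (0:ℝ) < (deriv (W x) 1)^2 := pow_pos (hfpos x hxm) 2
      have h4 : 1/3 ≤ deriv (fun t' => deriv (W t') 1) x / (deriv (W x) 1)^2 := by
        rw [le_div_iff₀ h3]; linarith
      rw [neg_div]
      linarith
  have hψ0 : ψ 0 = (deriv (W 0) 1)⁻¹ := by simp [hψdef]
  -- the pointwise lower bound and t < 3/a
  have hkey : ∀ t ∈ Set.Ico (0:ℝ) T,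
      deriv (W 0) 1 * t < 3 ∧ 3 * deriv (W 0) 1 / (3 - deriv (W 0) 1 * t) ≤ deriv (W t) 1 := by
    intro t ht
    have hft := hfpos t ht
    have hinv : (deriv (W t) 1)⁻¹ ≤ (deriv (W 0) 1)⁻¹ - t/3 := by
      have h := hψanti h0mem ht ht.1
      rw [hψ0] at h
      simp only [hψdef] at h
      linarith
    have hinvpos : 0 < (deriv (W t) 1)⁻¹ := inv_pos.mpr hft
    have h3t : deriv (W 0) 1 * t < 3 := by
      have h1 : t/3 < (deriv (W 0) 1)⁻¹ := by linarith
      have h3 := mul_lt_mul_of_pos_left h1 h0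
      rw [mul_inv_cancel₀ (ne_of_gt h0)] at h3
      nlinarith
    refine ⟨h3t, ?_⟩
    have hpos3 : 0 < 3 - deriv (W 0) 1 * t := by linarith
    rw [div_le_iff₀ hpos3]
    have h5 : 1 ≤ deriv (W t) 1 * ((deriv (W 0) 1)⁻¹ - t/3) := by
      have h := mul_le_mul_of_nonneg_left hinv (le_of_lt hft)
      rwa [mul_inv_cancel₀ (ne_of_gt hft)] at h
    have h6 := mul_le_mul_of_nonneg_left h5
      (by positivity : (0:ℝ) ≤ 3 * deriv (W 0) 1)
    have e2 : deriv (W 0) 1 * (deriv (W 0) 1)⁻¹ = 1 := mul_inv_cancel₀ (ne_of_gt h0)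
    nlinarith [h6, e2, hft.le]
  constructor
  · intro t ht
    exact (hkey t ht).2
  · by_contra hc
    push_neg at hc
    have hmem : 3 / deriv (W 0) 1 ∈ Set.Ico (0:ℝ) T := ⟨by positivity, hc⟩
    have hlt := (hkey _ hmem).1
    have heq : deriv (W 0) 1 * (3 / deriv (W 0) 1) = 3 := by field_simp
    rw [heq] at hlt
    exact lt_irrefl _ hlt
end

section
/- Suppose W : [0,T) × [0,1] → ℝ is smooth, W(t,0) = 0 for all t, W_{zz}(0,0) = 0, and W satisfies W_{tzz} − W_z W_{zz} + W W_{zzz} = 0. Then W_{zz}(t,0) = 0 for all t ∈ [0,T). -/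
open Set

/-- If `W` is smooth in both variables, so is the partial derivative in the second variable. -/
lemma contDiff_deriv_snd {W : ℝ → ℝ → ℝ} (h : ContDiff ℝ (⊤ : ℕ∞) (Function.uncurry W)) :
    ContDiff ℝ (⊤ : ℕ∞) (fun p : ℝ × ℝ => deriv (W p.1) p.2) := by
  have h1 : ContDiff ℝ (⊤ : ℕ∞) (fun p : (ℝ × ℝ) × ℝ => W p.1.1 p.2) := by
    exact h.comp (contDiff_fst.fst.prodMk contDiff_snd)
  have h2 : ContDiff ℝ (⊤ : ℕ∞) (fun p : ℝ × ℝ => fderiv ℝ (W p.1) p.2) := by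
    exact ContDiff.fderiv (f := fun p : ℝ × ℝ => W p.1) (g := Prod.snd) h1 contDiff_snd (by simp)
  have h3 : ContDiff ℝ (⊤ : ℕ∞) (fun p : ℝ × ℝ => fderiv ℝ (W p.1) p.2 1) :=
    h2.clm_apply contDiff_const
  have : (fun p : ℝ × ℝ => deriv (W p.1) p.2) = fun p : ℝ × ℝ => fderiv ℝ (W p.1) p.2 1 := by
    funext p; rw [← fderiv_apply_one_eq_deriv]
  rw [this]; exact h3

/-- Time invariance of the condition `W_{zz}(t,0) = 0` for smooth solutions of
`W_{tzz} − W_z W_{zz} + W W_{zzz} = 0` with `W(t,0) = 0`. -/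
theorem Wzz_invariance
    (T : ℝ) (hT : 0 < T) (W : ℝ → ℝ → ℝ)
    (hsmooth : ContDiff ℝ (⊤ : ℕ∞) (Function.uncurry W))
    (hbc : ∀ t ∈ Set.Ico (0:ℝ) T, W t 0 = 0)
    (hinit : deriv (deriv (W 0)) 0 = 0)
    (hpde : ∀ t ∈ Set.Ico (0:ℝ) T, ∀ z ∈ Set.Icc (0:ℝ) 1,
      deriv (fun t' => deriv (deriv (W t')) z) t
        - deriv (W t) z * deriv (deriv (W t)) z
        + W t z * deriv (deriv (deriv (W t))) z = 0) :
    ∀ t ∈ Set.Ico (0:ℝ) T, deriv (deriv (W t)) 0 = 0 := by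
  -- D1 is W_z, D2 is W_zz as functions of (t,z)
  have hD1 : ContDiff ℝ (⊤ : ℕ∞) (fun p : ℝ × ℝ => deriv (W p.1) p.2) := contDiff_deriv_snd hsmooth
  have hD1' : ContDiff ℝ (⊤ : ℕ∞) (Function.uncurry (fun t z => deriv (W t) z)) := hD1
  have hD2 : ContDiff ℝ (⊤ : ℕ∞) (fun p : ℝ × ℝ => deriv (deriv (W p.1)) p.2) := by
    have := contDiff_deriv_snd hD1'
    simpa using this
  set f : ℝ → ℝ := fun t => deriv (deriv (W t)) 0 with hf_def
  set g : ℝ → ℝ := fun t => deriv (W t) 0 with hg_def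
  have hf_smooth : ContDiff ℝ (⊤ : ℕ∞) f :=
    hD2.comp (contDiff_id.prodMk contDiff_const)
  have hg_cont : Continuous g :=
    (hD1.comp (contDiff_id.prodMk contDiff_const)).continuous
  -- the ODE satisfied by f on [0,T)
  have hode : ∀ x ∈ Set.Ico (0:ℝ) T, HasDerivAt f (g x * f x) x := by
    intro x hx
    have hd : HasDerivAt f (deriv f x) x :=
      (hf_smooth.differentiable (by simp) x).hasDerivAt
    have hp := hpde x hx 0 ⟨le_refl 0, by norm_num⟩
    rw [hbc x hx] at hp
    have : deriv f x = g x * f x := by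
      have : deriv (fun t' => deriv (deriv (W t')) 0) x = deriv f x := rfl
      rw [this] at hp; linarith
    rwa [this] at hd
  intro t ht
  -- Grönwall on [0, t]
  obtain ⟨C, hC⟩ : ∃ C, ∀ x ∈ Set.Icc (0:ℝ) t, ‖g x‖ ≤ C := by
    obtain ⟨C, hC⟩ := (isCompact_Icc (a := (0:ℝ)) (b := t)).exists_bound_of_continuousOn
      hg_cont.continuousOn
    exact ⟨C, hC⟩
  have key : ∀ x ∈ Set.Icc (0:ℝ) t, ‖f x‖ ≤ gronwallBound 0 C 0 (x - 0) := by
    apply norm_le_gronwallBound_of_norm_deriv_right_le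
      (f' := fun x => g x * f x)
    · exact (hf_smooth.continuous).continuousOn
    · intro x hx
      have hxT : x ∈ Set.Ico (0:ℝ) T := ⟨hx.1, lt_of_lt_of_le hx.2 (le_of_lt ht.2)⟩
      exact (hode x hxT).hasDerivWithinAt
    · simp [hf_def, hinit]
    · intro x hx
      have hx' : x ∈ Set.Icc (0:ℝ) t := ⟨hx.1, le_of_lt hx.2⟩
      calc ‖g x * f x‖ = ‖g x‖ * ‖f x‖ := norm_mul _ _
        _ ≤ C * ‖f x‖ + 0 := by
            rw [add_zero]
            exact mul_le_mul_of_nonneg_right (hC x hx') (norm_nonneg _)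
  have := key t ⟨ht.1, le_refl t⟩
  rw [gronwallBound_ε0_δ0] at this
  have : ‖f t‖ ≤ 0 := this
  simpa [hf_def] using le_antisymm this (norm_nonneg _)
end

section
/- Suppose (W₁,V₁) and (W₂,V₂) on [0,T) × [0,1] both solve W_{tz} − (W_z)² + W W_{zz} + 2∫₀¹ W_z² dz − ΩV + Ω∫₀¹ V dz = 0 and V_t − W_z V + W V_z + Ω W_z = 0 with boundary conditions W(t,0) = W(t,1) = 0, are smooth with W_i ∈ L²(0,T; H²(0,1)) and V_i ∈ L²(0,T; H¹(0,1)), and have the same initial data. Then the differences W = W₁ − W₂ and V = V₁ − V₂ satisfy the energy inequality d/dt(‖W_z‖²_{L²} + ‖V‖²_{L²}) ≤ C(‖W̄‖_{H²} + ‖V̄‖_{H¹})(‖W_z‖²_{L²} + ‖V‖²_{L²}) where W̄ = (W₁+W₂)/2, V̄ = (V₁+V₂)/2, and consequently W₁ = W₂ and V₁ = V₂ on [0,T). -/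
open Set MeasureTheory Filter Topology

noncomputable def pz (f : ℝ → ℝ → ℝ) : ℝ → ℝ → ℝ := fun t z => deriv (f t) z
noncomputable def pt' (f : ℝ → ℝ → ℝ) : ℝ → ℝ → ℝ := fun t z => deriv (fun t' => f t' z) t

lemma hasDerivAt_sectz {f : ℝ → ℝ → ℝ} (hf : ContDiff ℝ (⊤ : ℕ∞) (Function.uncurry f)) (t z : ℝ) :
    HasDerivAt (f t) (fderiv ℝ (Function.uncurry f) (t, z) (0, 1)) z := by
  have h := (hf.differentiable (by simp) (t, z)).hasFDerivAt
  have hline : HasDerivAt (fun z' : ℝ => ((t, z') : ℝ × ℝ)) ((0 : ℝ), (1 : ℝ)) z :=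
    (hasDerivAt_const z t).prodMk (hasDerivAt_id z)
  exact h.comp_hasDerivAt z hline

lemma hasDerivAt_sectt {f : ℝ → ℝ → ℝ} (hf : ContDiff ℝ (⊤ : ℕ∞) (Function.uncurry f)) (t z : ℝ) :
    HasDerivAt (fun t' => f t' z) (fderiv ℝ (Function.uncurry f) (t, z) (1, 0)) t := by
  have h := (hf.differentiable (by simp) (t, z)).hasFDerivAt
  have hline : HasDerivAt (fun t' : ℝ => ((t', z) : ℝ × ℝ)) ((1 : ℝ), (0 : ℝ)) t :=
    (hasDerivAt_id t).prodMk (hasDerivAt_const t z)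
  exact h.comp_hasDerivAt t hline

lemma pz_eq {f : ℝ → ℝ → ℝ} (hf : ContDiff ℝ (⊤ : ℕ∞) (Function.uncurry f)) (t z : ℝ) :
    pz f t z = fderiv ℝ (Function.uncurry f) (t, z) (0, 1) := (hasDerivAt_sectz hf t z).deriv

lemma pt'_eq {f : ℝ → ℝ → ℝ} (hf : ContDiff ℝ (⊤ : ℕ∞) (Function.uncurry f)) (t z : ℝ) :
    pt' f t z = fderiv ℝ (Function.uncurry f) (t, z) (1, 0) := (hasDerivAt_sectt hf t z).deriv

lemma hasDerivAt_pz {f : ℝ → ℝ → ℝ} (hf : ContDiff ℝ (⊤ : ℕ∞) (Function.uncurry f)) (t z : ℝ) :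
    HasDerivAt (f t) (pz f t z) z := (hasDerivAt_sectz hf t z).differentiableAt.hasDerivAt

lemma hasDerivAt_pt' {f : ℝ → ℝ → ℝ} (hf : ContDiff ℝ (⊤ : ℕ∞) (Function.uncurry f)) (t z : ℝ) :
    HasDerivAt (fun t' => f t' z) (pt' f t z) t :=
  (hasDerivAt_sectt hf t z).differentiableAt.hasDerivAt

lemma contDiff_pz {f : ℝ → ℝ → ℝ} (hf : ContDiff ℝ (⊤ : ℕ∞) (Function.uncurry f)) :
    ContDiff ℝ (⊤ : ℕ∞) (Function.uncurry (pz f)) := by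
  have h : Function.uncurry (pz f) = fun p : ℝ × ℝ => fderiv ℝ (Function.uncurry f) p (0, 1) :=
    funext fun p => by cases p with | mk t z => exact pz_eq hf t z
  rw [h]
  exact (hf.fderiv_right (by simp)).clm_apply contDiff_const

lemma contDiff_pt' {f : ℝ → ℝ → ℝ} (hf : ContDiff ℝ (⊤ : ℕ∞) (Function.uncurry f)) :
    ContDiff ℝ (⊤ : ℕ∞) (Function.uncurry (pt' f)) := by
  have h : Function.uncurry (pt' f) = fun p : ℝ × ℝ => fderiv ℝ (Function.uncurry f) p (1, 0) :=
    funext fun p => by cases p with | mk t z => exact pt'_eq hf t z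
  rw [h]
  exact (hf.fderiv_right (by simp)).clm_apply contDiff_const

lemma continuous_sect {f : ℝ → ℝ → ℝ} (hf : ContDiff ℝ (⊤ : ℕ∞) (Function.uncurry f)) (t : ℝ) :
    Continuous (f t) := hf.continuous.comp (continuous_const.prodMk continuous_id)

lemma continuous_sectt {f : ℝ → ℝ → ℝ} (hf : ContDiff ℝ (⊤ : ℕ∞) (Function.uncurry f)) (z : ℝ) :
    Continuous (fun t => f t z) := hf.continuous.comp (continuous_id.prodMk continuous_const)

lemma hasDerivAt_param_int (F : ℝ → ℝ → ℝ) (hF : ContDiff ℝ (⊤ : ℕ∞) (Function.uncurry F)) (x₀ : ℝ) :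
    HasDerivAt (fun x => ∫ z in (0:ℝ)..1, F x z) (∫ z in (0:ℝ)..1, pt' F x₀ z) x₀ := by
  have hG : Continuous (Function.uncurry (pt' F)) := (contDiff_pt' hF).continuous
  obtain ⟨M, hM⟩ :=
    ((isCompact_closedBall x₀ 1).prod isCompact_Icc).exists_bound_of_continuousOn
      (s := Metric.closedBall x₀ 1 ×ˢ Icc (0:ℝ) 1) hG.continuousOn
  have hsub : Set.uIoc (0:ℝ) 1 ⊆ Icc (0:ℝ) 1 := by
    rw [uIoc_of_le (zero_le_one' ℝ)]; exact Ioc_subset_Icc_self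
  refine (intervalIntegral.hasDerivAt_integral_of_dominated_loc_of_deriv_le
      (F := F) (F' := pt' F) (bound := fun _ => M) (s := Metric.ball x₀ 1) (Metric.ball_mem_nhds x₀ one_pos) ?_ ?_ ?_ ?_ ?_ ?_).2
  · exact Eventually.of_forall fun x => (continuous_sect hF x).aestronglyMeasurable
  · exact (continuous_sect hF x₀).intervalIntegrable _ _
  · exact (continuous_sect (contDiff_pt' hF) x₀).aestronglyMeasurable
  · refine Eventually.of_forall fun z hz x hx => ?_
    exact hM (x, z) ⟨Metric.ball_subset_closedBall hx, hsub hz⟩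
  · exact intervalIntegrable_const
  · exact Eventually.of_forall fun z _ x _ => hasDerivAt_pt' hF x z

/-- Cauchy-Schwarz on `[0,1]`: `(∫|g|)² ≤ ∫ g²`. -/
lemma cs1 (g : ℝ → ℝ) (hg : Continuous g) :
    (∫ s in (0:ℝ)..1, |g s|) ^ 2 ≤ ∫ s in (0:ℝ)..1, (g s) ^ 2 := by
  set A := ∫ s in (0:ℝ)..1, |g s| with hA
  set B := ∫ s in (0:ℝ)..1, (g s) ^ 2 with hB
  have hA0 : 0 ≤ A := intervalIntegral.integral_nonneg zero_le_one fun s _ => abs_nonneg _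
  rcases eq_or_lt_of_le hA0 with h | h
  · simpa [← h] using intervalIntegral.integral_nonneg zero_le_one fun s _ => sq_nonneg (g s)
  · -- pointwise: 2 A |g s| ≤ g s ^ 2 + A ^ 2
    have key : 2 * A * A ≤ B + A ^ 2 := by
      have hpt : ∀ s, 2 * A * |g s| ≤ (g s) ^ 2 + A ^ 2 := by
        intro s
        nlinarith [sq_nonneg (|g s| - A), sq_abs (g s)]
      calc 2 * A * A = ∫ s in (0:ℝ)..1, 2 * A * |g s| := by
            rw [← intervalIntegral.integral_const_mul, hA]
        _ ≤ ∫ s in (0:ℝ)..1, ((g s) ^ 2 + A ^ 2) := by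
            apply intervalIntegral.integral_mono_on zero_le_one
            · exact (continuous_const.mul hg.abs).intervalIntegrable _ _
            · exact ((hg.pow 2).add continuous_const).intervalIntegrable _ _
            · exact fun s _ => hpt s
        _ = B + A ^ 2 := by
            rw [intervalIntegral.integral_add ((hg.fun_pow 2).intervalIntegrable _ _)
              (intervalIntegrable_const)]
            simp [hB]
    nlinarith

/-- A continuous nonnegative function on `[0,1]` with vanishing integral is zero. -/
lemma zero_of_integral_zero (g : ℝ → ℝ) (hg : Continuous g) (hnn : ∀ s, 0 ≤ g s)
    (hz : (∫ s in (0:ℝ)..1, g s) = 0) : ∀ z ∈ Icc (0:ℝ) 1, g z = 0 := by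
  set G : ℝ → ℝ := fun z => ∫ s in (0:ℝ)..z, g s with hG
  have hmono : MonotoneOn G (Icc (0:ℝ) 1) := by
    intro x hx y hy hxy
    have : G y - G x = ∫ s in x..y, g s := by
      simp only [hG]
      rw [← intervalIntegral.integral_add_adjacent_intervals
        (hg.intervalIntegrable 0 x) (hg.intervalIntegrable x y)]
      ring
    nlinarith [intervalIntegral.integral_nonneg (μ := volume) (f := g) hxy (fun s _ => hnn s), this]
  have hG0 : G 0 = 0 := by simp [hG]
  have hG1 : G 1 = 0 := hz
  have hconst : ∀ x ∈ Icc (0:ℝ) 1, G x = 0 := by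
    intro x hx
    have h1 := hmono (left_mem_Icc.2 zero_le_one) hx hx.1
    have h2 := hmono hx (right_mem_Icc.2 zero_le_one) hx.2
    rw [hG0] at h1; rw [hG1] at h2; linarith
  -- derivative of G is g
  intro z hz'
  have hd : HasDerivAt G (g z) z := intervalIntegral.integral_hasDerivAt_right
    (hg.intervalIntegrable 0 z) (hg.stronglyMeasurableAtFilter _ _) hg.continuousAt
  by_contra hne
  have hpos : 0 < g z := lt_of_le_of_ne (hnn z) (Ne.symm hne)
  -- then G is strictly increasing near z, contradicting G = 0 on a subinterval
  -- pick interval [z-δ, z] or [z, z+δ] inside [0,1]... use mean value / local behavior: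
  -- simpler: G is differentiable at z with positive derivative but G has a local min/max...
  -- Use that G restricted to [0,1] is constant 0; pick a point u ∈ [0,1], u ≠ z close to z.
  -- slope (G u - G z)/(u - z) = 0 but tends to g z > 0.
  have htend := hd.hasDerivWithinAt (s := Icc (0:ℝ) 1)
  have : deriv G z = g z := hd.deriv
  -- use continuity of g: g > gz/2 near z, integrate over a small subinterval of [0,1]
  have hcont : ContinuousAt g z := hg.continuousAt
  obtain ⟨δ, hδpos, hδ⟩ := Metric.continuousAt_iff.1 hcont (g z / 2) (by linarith)
  -- choose endpoints
  set a := max 0 (z - δ/2) with ha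
  set b := min 1 (z + δ/2) with hb
  have hab : a < b := by
    rcases hz' with ⟨h0, h1⟩
    simp only [ha, hb, lt_min_iff, max_lt_iff]
    constructor <;> constructor <;> nlinarith
  have haI : a ∈ Icc (0:ℝ) 1 := by
    rcases hz' with ⟨h0, h1⟩
    constructor
    · exact le_max_left _ _
    · simp only [ha, max_le_iff]; constructor <;> nlinarith
  have hbI : b ∈ Icc (0:ℝ) 1 := by
    rcases hz' with ⟨h0, h1⟩
    constructor
    · simp only [hb, le_min_iff]; constructor <;> nlinarith
    · exact min_le_left _ _
  have hlow : ∀ s ∈ Icc a b, g z / 2 ≤ g s := by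
    intro s hs
    have hsd : dist s z < δ := by
      rcases hs with ⟨hs1, hs2⟩
      rw [Real.dist_eq, abs_lt]
      constructor
      · have := le_max_right 0 (z - δ/2); nlinarith [hs1, this]
      · have := min_le_right 1 (z + δ/2); nlinarith [hs2, this]
    have := hδ hsd
    rw [Real.dist_eq, abs_lt] at this
    linarith
  have : g z / 2 * (b - a) ≤ G b - G a := by
    have heq : G b - G a = ∫ s in a..b, g s := by
      simp only [hG]
      rw [← intervalIntegral.integral_add_adjacent_intervals
        (hg.intervalIntegrable 0 a) (hg.intervalIntegrable a b)]
      ring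
    rw [heq]
    calc g z / 2 * (b - a) = ∫ _ in a..b, g z / 2 := by simp [mul_comm]; ring
      _ ≤ ∫ s in a..b, g s := by
          apply intervalIntegral.integral_mono_on hab.le intervalIntegrable_const
            (hg.intervalIntegrable _ _)
          intro s hs; exact hlow s hs
  rw [hconst a haI, hconst b hbI] at this
  nlinarith

lemma gronwall_zero (f f' : ℝ → ℝ) (K b : ℝ)
    (hf : ∀ t, HasDerivAt f (f' t) t) (h0 : f 0 = 0)
    (hb : ∀ t ∈ Ico (0:ℝ) b, f' t ≤ K * f t) :
    ∀ t ∈ Icc (0:ℝ) b, f t ≤ 0 := by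
  intro t ht
  have h := le_gronwallBound_of_liminf_deriv_right_le (f := f) (f' := f')
    (δ := 0) (K := K) (ε := 0) (a := 0) (b := b)
    (fun x _ => (hf x).continuousAt.continuousWithinAt)
    ?_ (le_of_eq h0) (fun x hx => by simpa using hb x hx) t ht
  · simpa [gronwallBound_ε0_δ0] using h
  · intro x _ r hr
    have hslope : Tendsto (fun z => (z - x)⁻¹ * (f z - f x)) (𝓝[>] x) (𝓝 (f' x)) := by
      have h1 : Tendsto (slope f x) (𝓝[≠] x) (𝓝 (f' x)) :=
        (hasDerivAt_iff_tendsto_slope.1 (hf x))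
      have h2 : 𝓝[>] x ≤ 𝓝[≠] x := nhdsWithin_mono _ fun z hz => ne_of_gt hz
      have := h1.mono_left h2
      refine this.congr fun z => ?_
      simp [slope, vsub_eq_sub, smul_eq_mul]
    exact ((hslope.eventually (eventually_lt_nhds hr)).frequently)

/-- The `H¹(0,1)` norm `(∫₀¹ f² + (f')²)^{1/2}`. -/
noncomputable def H1norm (f : ℝ → ℝ) : ℝ :=
  Real.sqrt ((∫ z in (0:ℝ)..1, (f z) ^ 2) + ∫ z in (0:ℝ)..1, (deriv f z) ^ 2)

/-- The `H²(0,1)` norm `(∫₀¹ f² + (f')² + (f'')²)^{1/2}`. -/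
noncomputable def H2norm (f : ℝ → ℝ) : ℝ :=
  Real.sqrt ((∫ z in (0:ℝ)..1, (f z) ^ 2) + (∫ z in (0:ℝ)..1, (deriv f z) ^ 2)
    + ∫ z in (0:ℝ)..1, (deriv (deriv f) z) ^ 2)

set_option maxHeartbeats 4000000 in
/-- Energy inequality and uniqueness for the reduced rotating hydrostatic Euler
system: two smooth solutions in `L²(0,T;H²) × L²(0,T;H¹)` with the same
initial data coincide, and their difference satisfies a Grönwall-type energy
inequality. -/
theorem uniqueness_reduced_system
    (T Ω : ℝ) (hT : 0 < T)
    (W₁ W₂ V₁ V₂ : ℝ → ℝ → ℝ)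
    (hW₁ : ContDiff ℝ (⊤ : ℕ∞) (Function.uncurry W₁))
    (hW₂ : ContDiff ℝ (⊤ : ℕ∞) (Function.uncurry W₂))
    (hV₁ : ContDiff ℝ (⊤ : ℕ∞) (Function.uncurry V₁))
    (hV₂ : ContDiff ℝ (⊤ : ℕ∞) (Function.uncurry V₂))
    -- L² in time regularity
    (hL2W₁ : IntegrableOn (fun t => (H2norm (W₁ t)) ^ 2) (Set.Ioo 0 T))
    (hL2W₂ : IntegrableOn (fun t => (H2norm (W₂ t)) ^ 2) (Set.Ioo 0 T))
    (hL2V₁ : IntegrableOn (fun t => (H1norm (V₁ t)) ^ 2) (Set.Ioo 0 T))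
    (hL2V₂ : IntegrableOn (fun t => (H1norm (V₂ t)) ^ 2) (Set.Ioo 0 T))
    -- both pairs solve the first equation
    (hpde1 : ∀ (W V : ℝ → ℝ → ℝ), (W = W₁ ∧ V = V₁) ∨ (W = W₂ ∧ V = V₂) →
      ∀ t ∈ Set.Ico (0:ℝ) T, ∀ z ∈ Set.Icc (0:ℝ) 1,
        deriv (fun t' => deriv (W t') z) t
          - (deriv (W t) z) ^ 2
          + W t z * deriv (deriv (W t)) z
          + 2 * (∫ s in (0:ℝ)..1, (deriv (W t) s) ^ 2)
          - Ω * V t z + Ω * (∫ s in (0:ℝ)..1, V t s) = 0)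
    -- both pairs solve the second equation
    (hpde2 : ∀ (W V : ℝ → ℝ → ℝ), (W = W₁ ∧ V = V₁) ∨ (W = W₂ ∧ V = V₂) →
      ∀ t ∈ Set.Ico (0:ℝ) T, ∀ z ∈ Set.Icc (0:ℝ) 1,
        deriv (fun t' => V t' z) t
          - deriv (W t) z * V t z
          + W t z * deriv (V t) z
          + Ω * deriv (W t) z = 0)
    -- boundary conditions
    (hbc : ∀ t ∈ Set.Ico (0:ℝ) T,
      W₁ t 0 = 0 ∧ W₁ t 1 = 0 ∧ W₂ t 0 = 0 ∧ W₂ t 1 = 0)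
    -- same initial data
    (hic : ∀ z ∈ Set.Icc (0:ℝ) 1, W₁ 0 z = W₂ 0 z ∧ V₁ 0 z = V₂ 0 z) :
    (∃ C > (0:ℝ), ∀ t ∈ Set.Ico (0:ℝ) T,
      deriv (fun t' =>
        (∫ z in (0:ℝ)..1, (deriv (fun z' => W₁ t' z' - W₂ t' z') z) ^ 2)
          + ∫ z in (0:ℝ)..1, (V₁ t' z - V₂ t' z) ^ 2) t
        ≤ C * (H2norm (fun z => (W₁ t z + W₂ t z) / 2)
              + H1norm (fun z => (V₁ t z + V₂ t z) / 2)) *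
          ((∫ z in (0:ℝ)..1, (deriv (fun z' => W₁ t z' - W₂ t z') z) ^ 2)
            + ∫ z in (0:ℝ)..1, (V₁ t z - V₂ t z) ^ 2)) ∧
    ∀ t ∈ Set.Ico (0:ℝ) T, ∀ z ∈ Set.Icc (0:ℝ) 1,
      W₁ t z = W₂ t z ∧ V₁ t z = V₂ t z := by
  -- difference functions
  set w : ℝ → ℝ → ℝ := fun a b => W₁ a b - W₂ a b with hw
  set v : ℝ → ℝ → ℝ := fun a b => V₁ a b - V₂ a b with hv
  have hww : ContDiff ℝ (⊤ : ℕ∞) (Function.uncurry w) := hW₁.sub hW₂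
  have hvv : ContDiff ℝ (⊤ : ℕ∞) (Function.uncurry v) := hV₁.sub hV₂
  set q : ℝ → ℝ → ℝ := pz w with hq
  have hqq : ContDiff ℝ (⊤ : ℕ∞) (Function.uncurry q) := contDiff_pz hww
  -- the energy
  set E : ℝ → ℝ := fun t' =>
      (∫ z in (0:ℝ)..1, (deriv (fun z' => W₁ t' z' - W₂ t' z') z) ^ 2)
        + ∫ z in (0:ℝ)..1, (V₁ t' z - V₂ t' z) ^ 2 with hE
  have hEalt : E = fun t' => (∫ z in (0:ℝ)..1, (q t' z) ^ 2)
      + ∫ z in (0:ℝ)..1, (v t' z) ^ 2 := rfl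
  -- E is nonnegative
  have hEnn : ∀ t, 0 ≤ E t := by
    intro t
    have h1 : (0:ℝ) ≤ ∫ z in (0:ℝ)..1, (q t z) ^ 2 :=
      intervalIntegral.integral_nonneg zero_le_one fun s _ => sq_nonneg _
    have h2 : (0:ℝ) ≤ ∫ z in (0:ℝ)..1, (v t z) ^ 2 :=
      intervalIntegral.integral_nonneg zero_le_one fun s _ => sq_nonneg _
    simp only [hEalt]; exact add_nonneg h1 h2
  -- main uniqueness claim
  have huniq : ∀ t ∈ Set.Ico (0:ℝ) T, ∀ z ∈ Set.Icc (0:ℝ) 1,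
      w t z = 0 ∧ v t z = 0 ∧ q t z = 0 := by
    -- averages and coefficients
    set sb : ℝ → ℝ → ℝ := fun a b => (W₁ a b + W₂ a b) / 2 with hsbdef
    set vb : ℝ → ℝ → ℝ := fun a b => (V₁ a b + V₂ a b) / 2 with hvbdef
    have hsbb : ContDiff ℝ (⊤ : ℕ∞) (Function.uncurry sb) := (hW₁.add hW₂).div_const 2
    have hvbb : ContDiff ℝ (⊤ : ℕ∞) (Function.uncurry vb) := (hV₁.add hV₂).div_const 2
    set B : ℝ → ℝ → ℝ := pz sb with hBdef
    have hBB : ContDiff ℝ (⊤ : ℕ∞) (Function.uncurry B) := contDiff_pz hsbb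
    set Cc : ℝ → ℝ → ℝ := pz B with hCdef
    have hCC : ContDiff ℝ (⊤ : ℕ∞) (Function.uncurry Cc) := contDiff_pz hBB
    set ee : ℝ → ℝ → ℝ := pz vb with heedef
    have hee : ContDiff ℝ (⊤ : ℕ∞) (Function.uncurry ee) := contDiff_pz hvbb
    set Q : ℝ → ℝ → ℝ := pz q with hQdef
    have hQQ : ContDiff ℝ (⊤ : ℕ∞) (Function.uncurry Q) := contDiff_pz hqq
    have hpvv : ContDiff ℝ (⊤ : ℕ∞) (Function.uncurry (pz v)) := contDiff_pz hvv
    -- pointwise derivative identities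
    have hq_ab : ∀ a b, q a b = pz W₁ a b - pz W₂ a b := fun a b =>
      ((hasDerivAt_pz hW₁ a b).sub (hasDerivAt_pz hW₂ a b)).deriv
    have hB_ab : ∀ a b, B a b = (pz W₁ a b + pz W₂ a b) / 2 := fun a b =>
      (((hasDerivAt_pz hW₁ a b).add (hasDerivAt_pz hW₂ a b)).div_const 2).deriv
    have hpv_ab : ∀ a b, pz v a b = pz V₁ a b - pz V₂ a b := fun a b =>
      ((hasDerivAt_pz hV₁ a b).sub (hasDerivAt_pz hV₂ a b)).deriv
    have he_ab : ∀ a b, ee a b = (pz V₁ a b + pz V₂ a b) / 2 := fun a b =>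
      (((hasDerivAt_pz hV₁ a b).add (hasDerivAt_pz hV₂ a b)).div_const 2).deriv
    have hQ_ab : ∀ a b, Q a b = pz (pz W₁) a b - pz (pz W₂) a b := by
      intro a b
      have h1 : q a = fun y => pz W₁ a y - pz W₂ a y := funext fun y => hq_ab a y
      have h2 : Q a b = deriv (q a) b := rfl
      rw [h2, h1]
      exact ((hasDerivAt_pz (contDiff_pz hW₁) a b).sub
        (hasDerivAt_pz (contDiff_pz hW₂) a b)).deriv
    have hC_ab : ∀ a b, Cc a b = (pz (pz W₁) a b + pz (pz W₂) a b) / 2 := by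
      intro a b
      have h1 : B a = fun y => (pz W₁ a y + pz W₂ a y) / 2 := funext fun y => hB_ab a y
      have h2 : Cc a b = deriv (B a) b := rfl
      rw [h2, h1]
      exact (((hasDerivAt_pz (contDiff_pz hW₁) a b).add
        (hasDerivAt_pz (contDiff_pz hW₂) a b)).div_const 2).deriv
    -- mixed partial derivatives of the differences
    have hmixq : ∀ t z, pt' q t z = pt' (pz W₁) t z - pt' (pz W₂) t z := by
      intro t z
      have h1 : (fun t' => q t' z) = fun t' => pz W₁ t' z - pz W₂ t' z :=
        funext fun t' => hq_ab t' z
      have h2 : pt' q t z = deriv (fun t' => pz W₁ t' z - pz W₂ t' z) t := by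
        show deriv (fun t' => q t' z) t = _
        rw [h1]
      rw [h2]
      exact ((hasDerivAt_pt' (contDiff_pz hW₁) t z).sub
        (hasDerivAt_pt' (contDiff_pz hW₂) t z)).deriv
    have hmixv : ∀ t z, pt' v t z = pt' V₁ t z - pt' V₂ t z := fun t z =>
      ((hasDerivAt_pt' hV₁ t z).sub (hasDerivAt_pt' hV₂ t z)).deriv
    -- integral identities
    have hIq : ∀ t, (∫ s in (0:ℝ)..1, (pz W₁ t s) ^ 2)
        - (∫ s in (0:ℝ)..1, (pz W₂ t s) ^ 2) = 2 * ∫ s in (0:ℝ)..1, B t s * q t s := by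
      intro t
      rw [← intervalIntegral.integral_const_mul, ← intervalIntegral.integral_sub
        (((continuous_sect (contDiff_pz hW₁) t).fun_pow 2).intervalIntegrable _ _)
        (((continuous_sect (contDiff_pz hW₂) t).fun_pow 2).intervalIntegrable _ _)]
      refine intervalIntegral.integral_congr fun s _ => ?_
      rw [hq_ab t s, hB_ab t s]; ring
    have hIvt : ∀ t, (∫ s in (0:ℝ)..1, V₁ t s) - (∫ s in (0:ℝ)..1, V₂ t s)
        = ∫ s in (0:ℝ)..1, v t s := by
      intro t
      rw [← intervalIntegral.integral_sub
        ((continuous_sect hV₁ t).intervalIntegrable _ _)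
        ((continuous_sect hV₂ t).intervalIntegrable _ _)]
    -- equation for the mixed derivative of the difference
    have hM : ∀ t ∈ Set.Ico (0:ℝ) T, ∀ z ∈ Set.Icc (0:ℝ) 1,
        pt' q t z = 2 * B t z * q t z - sb t z * Q t z - Cc t z * w t z
          - 4 * (∫ s in (0:ℝ)..1, B t s * q t s) + Ω * v t z
          - Ω * (∫ s in (0:ℝ)..1, v t s) := by
      intro t ht z hz
      have e₁ : pt' (pz W₁) t z - (pz W₁ t z) ^ 2 + W₁ t z * pz (pz W₁) t z
          + 2 * (∫ s in (0:ℝ)..1, (pz W₁ t s) ^ 2) - Ω * V₁ t z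
          + Ω * (∫ s in (0:ℝ)..1, V₁ t s) = 0 := hpde1 W₁ V₁ (Or.inl ⟨rfl, rfl⟩) t ht z hz
      have e₂ : pt' (pz W₂) t z - (pz W₂ t z) ^ 2 + W₂ t z * pz (pz W₂) t z
          + 2 * (∫ s in (0:ℝ)..1, (pz W₂ t s) ^ 2) - Ω * V₂ t z
          + Ω * (∫ s in (0:ℝ)..1, V₂ t s) = 0 := hpde1 W₂ V₂ (Or.inr ⟨rfl, rfl⟩) t ht z hz
      have hIq' := hIq t
      have hIvt' := hIvt t
      rw [hmixq t z, hq_ab t z, hB_ab t z, hQ_ab t z, hC_ab t z,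
        show w t z = W₁ t z - W₂ t z from rfl,
        show sb t z = (W₁ t z + W₂ t z) / 2 from rfl,
        show v t z = V₁ t z - V₂ t z from rfl]
      linear_combination e₁ - e₂ - 2 * hIq' - Ω * hIvt'
    have hN : ∀ t ∈ Set.Ico (0:ℝ) T, ∀ z ∈ Set.Icc (0:ℝ) 1,
        pt' v t z = B t z * v t z + q t z * vb t z - sb t z * pz v t z
          - w t z * ee t z - Ω * q t z := by
      intro t ht z hz
      have f₁ : pt' V₁ t z - pz W₁ t z * V₁ t z + W₁ t z * pz V₁ t z
          + Ω * pz W₁ t z = 0 := hpde2 W₁ V₁ (Or.inl ⟨rfl, rfl⟩) t ht z hz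
      have f₂ : pt' V₂ t z - pz W₂ t z * V₂ t z + W₂ t z * pz V₂ t z
          + Ω * pz W₂ t z = 0 := hpde2 W₂ V₂ (Or.inr ⟨rfl, rfl⟩) t ht z hz
      rw [hmixv t z, hq_ab t z, hB_ab t z, hpv_ab t z, he_ab t z,
        show w t z = W₁ t z - W₂ t z from rfl,
        show sb t z = (W₁ t z + W₂ t z) / 2 from rfl,
        show v t z = V₁ t z - V₂ t z from rfl,
        show vb t z = (V₁ t z + V₂ t z) / 2 from rfl]
      linear_combination f₁ - f₂
    -- continuity facts (for fixed time slices)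
    have hcq : ∀ t, Continuous (q t) := fun t => continuous_sect hqq t
    have hcv : ∀ t, Continuous (v t) := fun t => continuous_sect hvv t
    have hcw : ∀ t, Continuous (w t) := fun t => continuous_sect hww t
    have hcB : ∀ t, Continuous (B t) := fun t => continuous_sect hBB t
    have hcC : ∀ t, Continuous (Cc t) := fun t => continuous_sect hCC t
    have hcQ : ∀ t, Continuous (Q t) := fun t => continuous_sect hQQ t
    have hcsb : ∀ t, Continuous (sb t) := fun t => continuous_sect hsbb t
    have hcvb : ∀ t, Continuous (vb t) := fun t => continuous_sect hvbb t
    have hce : ∀ t, Continuous (ee t) := fun t => continuous_sect hee t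
    have hcpv : ∀ t, Continuous (pz v t) := fun t => continuous_sect hpvv t
    -- time derivative of the energy
    set Ed : ℝ → ℝ := fun t => (∫ z in (0:ℝ)..1, 2 * q t z * pt' q t z)
        + ∫ z in (0:ℝ)..1, 2 * v t z * pt' v t z with hEddef
    have hEd : ∀ t, HasDerivAt E (Ed t) t := by
      intro t
      have h1 := hasDerivAt_param_int (fun a b => (q a b) ^ 2) (hqq.pow 2) t
      have h2 := hasDerivAt_param_int (fun a b => (v a b) ^ 2) (hvv.pow 2) t
      have e1 : (∫ z in (0:ℝ)..1, pt' (fun a b => (q a b) ^ 2) t z)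
          = ∫ z in (0:ℝ)..1, 2 * q t z * pt' q t z := by
        refine intervalIntegral.integral_congr fun z _ => ?_
        have hd := (hasDerivAt_pt' hqq t z).pow 2
        have : pt' (fun a b => (q a b) ^ 2) t z = 2 * q t z ^ (2 - 1) * pt' q t z := hd.deriv
        rw [this]; ring
      have e2 : (∫ z in (0:ℝ)..1, pt' (fun a b => (v a b) ^ 2) t z)
          = ∫ z in (0:ℝ)..1, 2 * v t z * pt' v t z := by
        refine intervalIntegral.integral_congr fun z _ => ?_
        have hd := (hasDerivAt_pt' hvv t z).pow 2
        have : pt' (fun a b => (v a b) ^ 2) t z = 2 * v t z ^ (2 - 1) * pt' v t z := hd.deriv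
        rw [this]; ring
      rw [e1] at h1
      rw [e2] at h2
      have := h1.add h2
      rw [hEalt]
      exact this
    -- FTC facts
    have hw_ftc : ∀ t z, w t z - w t 0 = ∫ s in (0:ℝ)..z, q t s := by
      intro t z
      rw [show (∫ s in (0:ℝ)..z, q t s) = ∫ s in (0:ℝ)..z, deriv (w t) s from rfl]
      rw [intervalIntegral.integral_deriv_eq_sub
        (fun x _ => (hasDerivAt_pz hww t x).differentiableAt)
        ((hcq t).intervalIntegrable _ _)]
    -- boundary values
    have hw0 : ∀ t ∈ Set.Ico (0:ℝ) T, w t 0 = 0 := by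
      intro t ht
      obtain ⟨h1, h2, h3, h4⟩ := hbc t ht
      show W₁ t 0 - W₂ t 0 = 0
      rw [h1, h3, sub_zero]
    have hw1 : ∀ t ∈ Set.Ico (0:ℝ) T, w t 1 = 0 := by
      intro t ht
      obtain ⟨h1, h2, h3, h4⟩ := hbc t ht
      show W₁ t 1 - W₂ t 1 = 0
      rw [h2, h4, sub_zero]
    have hsb0 : ∀ t ∈ Set.Ico (0:ℝ) T, sb t 0 = 0 := by
      intro t ht
      obtain ⟨h1, h2, h3, h4⟩ := hbc t ht
      show (W₁ t 0 + W₂ t 0) / 2 = 0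
      rw [h1, h3]; norm_num
    have hsb1 : ∀ t ∈ Set.Ico (0:ℝ) T, sb t 1 = 0 := by
      intro t ht
      obtain ⟨h1, h2, h3, h4⟩ := hbc t ht
      show (W₁ t 1 + W₂ t 1) / 2 = 0
      rw [h2, h4]; norm_num
    have hq_int0 : ∀ t ∈ Set.Ico (0:ℝ) T, (∫ z in (0:ℝ)..1, q t z) = 0 := by
      intro t ht
      have := hw_ftc t 1
      rw [hw0 t ht, hw1 t ht] at this
      linarith [this]
    -- integration by parts
    have hIBP1 : ∀ t ∈ Set.Ico (0:ℝ) T,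
        (∫ z in (0:ℝ)..1, sb t z * (q t z * Q t z))
          = -(1/2) * ∫ z in (0:ℝ)..1, B t z * (q t z) ^ 2 := by
      intro t ht
      have hu : ∀ x ∈ Set.uIcc (0:ℝ) 1, HasDerivAt (sb t) (B t x) x :=
        fun x _ => hasDerivAt_pz hsbb t x
      have hv' : ∀ x ∈ Set.uIcc (0:ℝ) 1,
          HasDerivAt (fun y => (q t y) ^ 2 / 2) (q t x * Q t x) x := by
        intro x _
        have h := ((hasDerivAt_pz hqq t x).fun_pow 2).div_const 2
        convert h using 1
        · rfl
        · rfl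
        push_cast
        ring
      have h := intervalIntegral.integral_mul_deriv_eq_deriv_mul hu hv'
        ((hcB t).intervalIntegrable _ _)
        (((hcq t).mul (hcQ t)).intervalIntegrable _ _)
      rw [hsb0 t ht, hsb1 t ht] at h
      simp only [zero_mul, sub_zero, zero_sub] at h
      rw [h, ← intervalIntegral.integral_const_mul, ← intervalIntegral.integral_neg]
      refine intervalIntegral.integral_congr fun z _ => ?_
      ring
    have hIBP2 : ∀ t ∈ Set.Ico (0:ℝ) T,
        (∫ z in (0:ℝ)..1, sb t z * (v t z * pz v t z))
          = -(1/2) * ∫ z in (0:ℝ)..1, B t z * (v t z) ^ 2 := by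
      intro t ht
      have hu : ∀ x ∈ Set.uIcc (0:ℝ) 1, HasDerivAt (sb t) (B t x) x :=
        fun x _ => hasDerivAt_pz hsbb t x
      have hv' : ∀ x ∈ Set.uIcc (0:ℝ) 1,
          HasDerivAt (fun y => (v t y) ^ 2 / 2) (v t x * pz v t x) x := by
        intro x _
        have h := ((hasDerivAt_pz hvv t x).fun_pow 2).div_const 2
        convert h using 1
        · rfl
        · rfl
        push_cast
        ring
      have h := intervalIntegral.integral_mul_deriv_eq_deriv_mul hu hv'
        ((hcB t).intervalIntegrable _ _)
        (((hcv t).mul (hcpv t)).intervalIntegrable _ _)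
      rw [hsb0 t ht, hsb1 t ht] at h
      simp only [zero_mul, sub_zero, zero_sub] at h
      rw [h, ← intervalIntegral.integral_const_mul, ← intervalIntegral.integral_neg]
      refine intervalIntegral.integral_congr fun z _ => ?_
      ring
    -- atomic integrals
    set S1 : ℝ → ℝ := fun t => ∫ z in (0:ℝ)..1, B t z * q t z ^ 2 with hS1def
    set S2 : ℝ → ℝ := fun t => ∫ z in (0:ℝ)..1, B t z * v t z ^ 2 with hS2def
    set S3 : ℝ → ℝ := fun t => ∫ z in (0:ℝ)..1, Cc t z * (w t z * q t z) with hS3def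
    set S4 : ℝ → ℝ := fun t => ∫ z in (0:ℝ)..1, vb t z * (q t z * v t z) with hS4def
    set S5 : ℝ → ℝ := fun t => ∫ z in (0:ℝ)..1, ee t z * (w t z * v t z) with hS5def
    set S6 : ℝ → ℝ := fun t => ∫ z in (0:ℝ)..1, q t z * v t z with hS6def
    have hEd_eq : ∀ t ∈ Set.Ico (0:ℝ) T,
        Ed t = 5 * S1 t + 3 * S2 t - 2 * S3 t + 2 * S4 t - 2 * S5 t := by
      intro t ht
      have cf1 : Continuous fun z => 4 * (B t z * q t z ^ 2) :=
        continuous_const.mul ((hcB t).mul ((hcq t).pow 2))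
      have cf2 : Continuous fun z => -2 * (sb t z * (q t z * Q t z)) :=
        continuous_const.mul ((hcsb t).mul ((hcq t).mul (hcQ t)))
      have cf3 : Continuous fun z => -2 * (Cc t z * (w t z * q t z)) :=
        continuous_const.mul ((hcC t).mul ((hcw t).mul (hcq t)))
      set c : ℝ := -8 * (∫ s in (0:ℝ)..1, B t s * q t s)
          - 2 * Ω * (∫ s in (0:ℝ)..1, v t s) with hcdef
      have cf4 : Continuous fun z => c * q t z := continuous_const.mul (hcq t)
      have cf5 : Continuous fun z => 2 * Ω * (q t z * v t z) :=
        continuous_const.mul ((hcq t).mul (hcv t))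
      have cp1 : Continuous fun z => 2 * (B t z * v t z ^ 2) :=
        continuous_const.mul ((hcB t).mul ((hcv t).pow 2))
      have cp2 : Continuous fun z => 2 * (vb t z * (q t z * v t z)) :=
        continuous_const.mul ((hcvb t).mul ((hcq t).mul (hcv t)))
      have cp3 : Continuous fun z => -2 * (sb t z * (v t z * pz v t z)) :=
        continuous_const.mul ((hcsb t).mul ((hcv t).mul (hcpv t)))
      have cp4 : Continuous fun z => -2 * (ee t z * (w t z * v t z)) :=
        continuous_const.mul ((hce t).mul ((hcw t).mul (hcv t)))
      have cp5 : Continuous fun z => -2 * Ω * (q t z * v t z) :=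
        continuous_const.mul ((hcq t).mul (hcv t))
      have h1 : (∫ z in (0:ℝ)..1, 2 * q t z * pt' q t z)
          = 5 * S1 t - 2 * S3 t + 2 * Ω * S6 t := by
        have hcong : (∫ z in (0:ℝ)..1, 2 * q t z * pt' q t z)
            = ∫ z in (0:ℝ)..1, (4 * (B t z * q t z ^ 2)
              + -2 * (sb t z * (q t z * Q t z))
              + -2 * (Cc t z * (w t z * q t z))
              + c * q t z
              + 2 * Ω * (q t z * v t z)) := by
          refine intervalIntegral.integral_congr fun z hz => ?_
          rw [Set.uIcc_of_le (zero_le_one' ℝ)] at hz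
          rw [hM t ht z hz, hcdef]
          ring
        rw [hcong]
        rw [intervalIntegral.integral_add
            ((((cf1.fun_add cf2).fun_add cf3).fun_add cf4).intervalIntegrable _ _)
            (cf5.intervalIntegrable _ _),
          intervalIntegral.integral_add
            (((cf1.fun_add cf2).fun_add cf3).intervalIntegrable _ _) (cf4.intervalIntegrable _ _),
          intervalIntegral.integral_add
            ((cf1.fun_add cf2).intervalIntegrable _ _) (cf3.intervalIntegrable _ _),
          intervalIntegral.integral_add
            (cf1.intervalIntegrable _ _) (cf2.intervalIntegrable _ _)]
        rw [intervalIntegral.integral_const_mul (4:ℝ),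
          intervalIntegral.integral_const_mul ((-2:ℝ)) (fun z => sb t z * (q t z * Q t z)),
          intervalIntegral.integral_const_mul ((-2:ℝ)) (fun z => Cc t z * (w t z * q t z)),
          intervalIntegral.integral_const_mul c,
          intervalIntegral.integral_const_mul (2*Ω)]
        rw [hIBP1 t ht, hq_int0 t ht]
        simp only [hS1def, hS3def, hS6def]
        ring
      have h2 : (∫ z in (0:ℝ)..1, 2 * v t z * pt' v t z)
          = 3 * S2 t + 2 * S4 t - 2 * S5 t - 2 * Ω * S6 t := by
        have hcong : (∫ z in (0:ℝ)..1, 2 * v t z * pt' v t z)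
            = ∫ z in (0:ℝ)..1, (2 * (B t z * v t z ^ 2)
              + 2 * (vb t z * (q t z * v t z))
              + -2 * (sb t z * (v t z * pz v t z))
              + -2 * (ee t z * (w t z * v t z))
              + -2 * Ω * (q t z * v t z)) := by
          refine intervalIntegral.integral_congr fun z hz => ?_
          rw [Set.uIcc_of_le (zero_le_one' ℝ)] at hz
          rw [hN t ht z hz]
          ring
        rw [hcong]
        rw [intervalIntegral.integral_add
            ((((cp1.fun_add cp2).fun_add cp3).fun_add cp4).intervalIntegrable _ _)
            (cp5.intervalIntegrable _ _),
          intervalIntegral.integral_add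
            (((cp1.fun_add cp2).fun_add cp3).intervalIntegrable _ _) (cp4.intervalIntegrable _ _),
          intervalIntegral.integral_add
            ((cp1.fun_add cp2).intervalIntegrable _ _) (cp3.intervalIntegrable _ _),
          intervalIntegral.integral_add
            (cp1.intervalIntegrable _ _) (cp2.intervalIntegrable _ _)]
        rw [intervalIntegral.integral_const_mul (2:ℝ) (fun z => B t z * v t z ^ 2),
          intervalIntegral.integral_const_mul ((2:ℝ)) (fun z => vb t z * (q t z * v t z)),
          intervalIntegral.integral_const_mul ((-2:ℝ)) (fun z => sb t z * (v t z * pz v t z)),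
          intervalIntegral.integral_const_mul ((-2:ℝ)) (fun z => ee t z * (w t z * v t z)),
          intervalIntegral.integral_const_mul (-2*Ω)]
        rw [hIBP2 t ht]
        simp only [hS2def, hS4def, hS5def, hS6def]
        ring
      have hEdt : Ed t = (∫ z in (0:ℝ)..1, 2 * q t z * pt' q t z)
          + ∫ z in (0:ℝ)..1, 2 * v t z * pt' v t z := rfl
      rw [hEdt, h1, h2]
      ring
    -- Poincaré inequality for the difference
    have hPoin : ∀ t ∈ Set.Ico (0:ℝ) T, ∀ z ∈ Set.Icc (0:ℝ) 1,
        (w t z) ^ 2 ≤ ∫ s in (0:ℝ)..1, q t s ^ 2 := by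
      intro t ht z hz
      have hwz : w t z = ∫ s in (0:ℝ)..z, q t s := by
        have := hw_ftc t z
        rw [hw0 t ht] at this
        linarith
      have habs : |w t z| ≤ ∫ s in (0:ℝ)..1, |q t s| := by
        rw [hwz]
        calc |∫ s in (0:ℝ)..z, q t s| ≤ ∫ s in (0:ℝ)..z, |q t s| :=
              intervalIntegral.abs_integral_le_integral_abs hz.1
          _ ≤ ∫ s in (0:ℝ)..1, |q t s| := by
              refine intervalIntegral.integral_mono_interval le_rfl hz.1 hz.2 ?_ ?_
              · exact MeasureTheory.ae_of_all _ fun s => abs_nonneg _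
              · exact (hcq t).abs.intervalIntegrable _ _
      calc (w t z) ^ 2 = |w t z| ^ 2 := (sq_abs _).symm
        _ ≤ (∫ s in (0:ℝ)..1, |q t s|) ^ 2 := by
            exact pow_le_pow_left₀ (abs_nonneg _) habs 2
        _ ≤ ∫ s in (0:ℝ)..1, q t s ^ 2 := cs1 (q t) (hcq t)
    -- initial energy vanishes
    have hE0 : E 0 = 0 := by
      have hw00 : ∀ z ∈ Set.Icc (0:ℝ) 1, w 0 z = 0 := by
        intro z hz
        have := (hic z hz).1
        show W₁ 0 z - W₂ 0 z = 0
        rw [this, sub_self]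
      have hv00 : ∀ z ∈ Set.Icc (0:ℝ) 1, v 0 z = 0 := by
        intro z hz
        have := (hic z hz).2
        show V₁ 0 z - V₂ 0 z = 0
        rw [this, sub_self]
      have hq00 : ∀ z ∈ Set.Ioo (0:ℝ) 1, q 0 z = 0 := by
        intro z hz
        have hmem : Set.Ioo (0:ℝ) 1 ∈ 𝓝 z := isOpen_Ioo.mem_nhds hz
        have hev : w 0 =ᶠ[𝓝 z] fun _ => (0:ℝ) :=
          Filter.eventually_of_mem hmem fun y hy => hw00 y (Set.Ioo_subset_Icc_self hy)
        show deriv (w 0) z = 0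
        rw [hev.deriv_eq, deriv_const]
      have hae : ∀ᵐ z : ℝ, z ∈ Set.uIoc (0:ℝ) 1 → (q 0 z) ^ 2 = (0:ℝ) := by
        have hne : ∀ᵐ z : ℝ, z ≠ (1:ℝ) := by
          rw [MeasureTheory.ae_iff]
          have : {z : ℝ | ¬z ≠ 1} = {(1:ℝ)} := by ext y; simp
          rw [this]
          exact Real.volume_singleton
        refine hne.mono fun z hz hmem => ?_
        rw [Set.uIoc_of_le (zero_le_one' ℝ)] at hmem
        have : z ∈ Set.Ioo (0:ℝ) 1 := ⟨hmem.1, lt_of_le_of_ne hmem.2 hz⟩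
        rw [hq00 z this]
        norm_num
      have h1 : (∫ z in (0:ℝ)..1, (q 0 z) ^ 2) = 0 := by
        rw [intervalIntegral.integral_congr_ae hae]
        simp
      have h2 : (∫ z in (0:ℝ)..1, (v 0 z) ^ 2) = 0 := by
        rw [intervalIntegral.integral_congr (g := fun _ => (0:ℝ)) (fun z hz => by
          rw [Set.uIcc_of_le (zero_le_one' ℝ)] at hz
          rw [hv00 z hz]; norm_num)]
        simp
      simp only [hEalt]
      rw [h1, h2, add_zero]
    -- Gronwall on every compact subinterval
    have key : ∀ T', 0 < T' → T' < T → ∀ t ∈ Set.Icc (0:ℝ) T', E t = 0 := by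
      intro T' hT'0 hT'T
      set R : ℝ × ℝ → ℝ := fun p => |Function.uncurry B p| + |Function.uncurry Cc p|
          + |Function.uncurry vb p| + |Function.uncurry ee p| with hRdef
      have hRc : Continuous R :=
        ((hBB.continuous.abs.add hCC.continuous.abs).add hvbb.continuous.abs).add
          hee.continuous.abs
      obtain ⟨M₀, hM₀⟩ := (isCompact_Icc.prod isCompact_Icc).exists_bound_of_continuousOn
        (s := Set.Icc (0:ℝ) T' ×ˢ Set.Icc (0:ℝ) 1) hRc.continuousOn
      set M : ℝ := max M₀ 0 with hMdef
      have hMnn : 0 ≤ M := le_max_right _ _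
      have hcomp : ∀ t ∈ Set.Icc (0:ℝ) T', ∀ z ∈ Set.Icc (0:ℝ) 1,
          |B t z| ≤ M ∧ |Cc t z| ≤ M ∧ |vb t z| ≤ M ∧ |ee t z| ≤ M := by
        intro t ht z hz
        have h := hM₀ (t, z) (Set.mk_mem_prod ht hz)
        have hR : R (t, z) = |B t z| + |Cc t z| + |vb t z| + |ee t z| := rfl
        rw [Real.norm_eq_abs, hR] at h
        have habs : |B t z| + |Cc t z| + |vb t z| + |ee t z|
            ≤ |(|B t z| + |Cc t z| + |vb t z| + |ee t z|)| := le_abs_self _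
        have hM0le : M₀ ≤ M := le_max_left _ _
        refine ⟨?_, ?_, ?_, ?_⟩ <;>
          (first
            | nlinarith [abs_nonneg (B t z), abs_nonneg (Cc t z), abs_nonneg (vb t z),
                abs_nonneg (ee t z)])
      have hbound : ∀ t ∈ Set.Ico (0:ℝ) T', Ed t ≤ 9 * M * E t := by
        intro t ht
        have htT : t ∈ Set.Ico (0:ℝ) T := ⟨ht.1, lt_trans ht.2 hT'T⟩
        have htc : t ∈ Set.Icc (0:ℝ) T' := ⟨ht.1, le_of_lt ht.2⟩
        set Iq2 : ℝ := ∫ z in (0:ℝ)..1, q t z ^ 2 with hIq2def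
        set Iv2 : ℝ := ∫ z in (0:ℝ)..1, v t z ^ 2 with hIv2def
        set Iw2 : ℝ := ∫ z in (0:ℝ)..1, w t z ^ 2 with hIw2def
        have hIq2nn : 0 ≤ Iq2 :=
          intervalIntegral.integral_nonneg zero_le_one fun s _ => sq_nonneg _
        have hIv2nn : 0 ≤ Iv2 :=
          intervalIntegral.integral_nonneg zero_le_one fun s _ => sq_nonneg _
        have hIw2q : Iw2 ≤ Iq2 := by
          have := intervalIntegral.integral_mono_on (μ := MeasureTheory.volume) (a := (0:ℝ)) (b := 1)
            (f := fun z => w t z ^ 2) (g := fun _ => Iq2) zero_le_one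
            (((hcw t).pow 2).intervalIntegrable _ _) (intervalIntegrable_const)
            (fun z hz => by
              show w t z ^ 2 ≤ Iq2
              exact hPoin t htT z hz)
          simpa using this
        -- individual bounds
        have b1 : S1 t ≤ M * Iq2 := by
          have hmono := intervalIntegral.integral_mono_on (μ := MeasureTheory.volume) (a := (0:ℝ)) (b := 1)
            (f := fun z => B t z * q t z ^ 2) (g := fun z => M * q t z ^ 2) zero_le_one
            (((hcB t).mul ((hcq t).pow 2)).intervalIntegrable _ _)
            ((continuous_const.mul ((hcq t).pow 2)).intervalIntegrable _ _)
            (fun z hz => by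
              show B t z * q t z ^ 2 ≤ M * q t z ^ 2
              have hB' := abs_le.1 (hcomp t htc z hz).1
              nlinarith [sq_nonneg (q t z), hB'.1, hB'.2])
          calc S1 t ≤ ∫ z in (0:ℝ)..1, M * q t z ^ 2 := hmono
            _ = M * Iq2 := by rw [intervalIntegral.integral_const_mul]
        have b2 : S2 t ≤ M * Iv2 := by
          have hmono := intervalIntegral.integral_mono_on (μ := MeasureTheory.volume) (a := (0:ℝ)) (b := 1)
            (f := fun z => B t z * v t z ^ 2) (g := fun z => M * v t z ^ 2) zero_le_one
            (((hcB t).mul ((hcv t).pow 2)).intervalIntegrable _ _)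
            ((continuous_const.mul ((hcv t).pow 2)).intervalIntegrable _ _)
            (fun z hz => by
              show B t z * v t z ^ 2 ≤ M * v t z ^ 2
              have hB' := abs_le.1 (hcomp t htc z hz).1
              nlinarith [sq_nonneg (v t z), hB'.1, hB'.2])
          calc S2 t ≤ ∫ z in (0:ℝ)..1, M * v t z ^ 2 := hmono
            _ = M * Iv2 := by rw [intervalIntegral.integral_const_mul]
        have b3 : -(2 * S3 t) ≤ M * (Iw2 + Iq2) := by
          have hneg : (∫ z in (0:ℝ)..1, -(2 * (Cc t z * (w t z * q t z)))) = -(2 * S3 t) := by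
            rw [intervalIntegral.integral_neg, intervalIntegral.integral_const_mul]
          have hmono := intervalIntegral.integral_mono_on (μ := MeasureTheory.volume) (a := (0:ℝ)) (b := 1)
            (f := fun z => -(2 * (Cc t z * (w t z * q t z))))
            (g := fun z => M * (w t z ^ 2 + q t z ^ 2)) zero_le_one
            ((continuous_const.mul ((hcC t).mul ((hcw t).mul (hcq t)))).neg.intervalIntegrable _ _)
            ((continuous_const.mul (((hcw t).pow 2).add ((hcq t).pow 2))).intervalIntegrable _ _)
            (fun z hz => by
              show -(2 * (Cc t z * (w t z * q t z))) ≤ M * (w t z ^ 2 + q t z ^ 2)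
              have hC' := abs_le.1 (hcomp t htc z hz).2.1
              nlinarith [mul_nonneg (by linarith [hC'.1] : (0:ℝ) ≤ M + Cc t z)
                  (sq_nonneg (w t z + q t z)),
                mul_nonneg (by linarith [hC'.2] : (0:ℝ) ≤ M - Cc t z)
                  (sq_nonneg (w t z - q t z))])
          have heval : (∫ z in (0:ℝ)..1, M * (w t z ^ 2 + q t z ^ 2)) = M * (Iw2 + Iq2) := by
            rw [intervalIntegral.integral_const_mul, intervalIntegral.integral_add
              (((hcw t).fun_pow 2).intervalIntegrable _ _) (((hcq t).fun_pow 2).intervalIntegrable _ _)]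
          rw [← hneg, ← heval]
          exact hmono
        have b4 : 2 * S4 t ≤ M * (Iq2 + Iv2) := by
          have hconst : (∫ z in (0:ℝ)..1, 2 * (vb t z * (q t z * v t z))) = 2 * S4 t := by
            rw [intervalIntegral.integral_const_mul]
          have hmono := intervalIntegral.integral_mono_on (μ := MeasureTheory.volume) (a := (0:ℝ)) (b := 1)
            (f := fun z => 2 * (vb t z * (q t z * v t z)))
            (g := fun z => M * (q t z ^ 2 + v t z ^ 2)) zero_le_one
            ((continuous_const.mul ((hcvb t).mul ((hcq t).mul (hcv t)))).intervalIntegrable _ _)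
            ((continuous_const.mul (((hcq t).pow 2).add ((hcv t).pow 2))).intervalIntegrable _ _)
            (fun z hz => by
              show 2 * (vb t z * (q t z * v t z)) ≤ M * (q t z ^ 2 + v t z ^ 2)
              have hv' := abs_le.1 (hcomp t htc z hz).2.2.1
              nlinarith [mul_nonneg (by linarith [hv'.1] : (0:ℝ) ≤ M + vb t z)
                  (sq_nonneg (q t z - v t z)),
                mul_nonneg (by linarith [hv'.2] : (0:ℝ) ≤ M - vb t z)
                  (sq_nonneg (q t z + v t z))])
          have heval : (∫ z in (0:ℝ)..1, M * (q t z ^ 2 + v t z ^ 2)) = M * (Iq2 + Iv2) := by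
            rw [intervalIntegral.integral_const_mul, intervalIntegral.integral_add
              (((hcq t).fun_pow 2).intervalIntegrable _ _) (((hcv t).fun_pow 2).intervalIntegrable _ _)]
          rw [← hconst, ← heval]
          exact hmono
        have b5 : -(2 * S5 t) ≤ M * (Iw2 + Iv2) := by
          have hneg : (∫ z in (0:ℝ)..1, -(2 * (ee t z * (w t z * v t z)))) = -(2 * S5 t) := by
            rw [intervalIntegral.integral_neg, intervalIntegral.integral_const_mul]
          have hmono := intervalIntegral.integral_mono_on (μ := MeasureTheory.volume) (a := (0:ℝ)) (b := 1)
            (f := fun z => -(2 * (ee t z * (w t z * v t z))))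
            (g := fun z => M * (w t z ^ 2 + v t z ^ 2)) zero_le_one
            ((continuous_const.mul ((hce t).mul ((hcw t).mul (hcv t)))).neg.intervalIntegrable _ _)
            ((continuous_const.mul (((hcw t).pow 2).add ((hcv t).pow 2))).intervalIntegrable _ _)
            (fun z hz => by
              show -(2 * (ee t z * (w t z * v t z))) ≤ M * (w t z ^ 2 + v t z ^ 2)
              have he' := abs_le.1 (hcomp t htc z hz).2.2.2
              nlinarith [mul_nonneg (by linarith [he'.1] : (0:ℝ) ≤ M + ee t z)
                  (sq_nonneg (w t z + v t z)),
                mul_nonneg (by linarith [he'.2] : (0:ℝ) ≤ M - ee t z)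
                  (sq_nonneg (w t z - v t z))])
          have heval : (∫ z in (0:ℝ)..1, M * (w t z ^ 2 + v t z ^ 2)) = M * (Iw2 + Iv2) := by
            rw [intervalIntegral.integral_const_mul, intervalIntegral.integral_add
              (((hcw t).fun_pow 2).intervalIntegrable _ _) (((hcv t).fun_pow 2).intervalIntegrable _ _)]
          rw [← hneg, ← heval]
          exact hmono
        have hEt : E t = Iq2 + Iv2 := by simp only [hEalt]; rfl
        rw [hEd_eq t htT, hEt]
        have hMw : M * Iw2 ≤ M * Iq2 := mul_le_mul_of_nonneg_left hIw2q hMnn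
        nlinarith [b1, b2, b3, b4, b5, hMw]
      intro t ht
      have hle := gronwall_zero E Ed (9 * M) T' hEd hE0 hbound t ht
      exact le_antisymm hle (hEnn t)
    -- conclude pointwise vanishing
    intro t ht z hz
    set T' : ℝ := (t + T) / 2 with hT'def
    have hT'0 : 0 < T' := by rw [hT'def]; nlinarith [ht.1, hT]
    have hT'T : T' < T := by rw [hT'def]; nlinarith [ht.2]
    have htT' : t ∈ Set.Icc (0:ℝ) T' := ⟨ht.1, by rw [hT'def]; nlinarith [ht.2]⟩
    have hEt : E t = 0 := key T' hT'0 hT'T t htT'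
    have hIq2nn : (0:ℝ) ≤ ∫ s in (0:ℝ)..1, q t s ^ 2 :=
      intervalIntegral.integral_nonneg zero_le_one fun s _ => sq_nonneg _
    have hIv2nn : (0:ℝ) ≤ ∫ s in (0:ℝ)..1, v t s ^ 2 :=
      intervalIntegral.integral_nonneg zero_le_one fun s _ => sq_nonneg _
    have hEt' : (∫ s in (0:ℝ)..1, q t s ^ 2) + (∫ s in (0:ℝ)..1, v t s ^ 2) = 0 := by
      have : E t = (∫ s in (0:ℝ)..1, q t s ^ 2) + ∫ s in (0:ℝ)..1, v t s ^ 2 := by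
        simp only [hEalt]
      linarith [this ▸ hEt]
    have hq2 : (∫ s in (0:ℝ)..1, q t s ^ 2) = 0 := by linarith
    have hv2 : (∫ s in (0:ℝ)..1, v t s ^ 2) = 0 := by linarith
    have hqz : ∀ y ∈ Set.Icc (0:ℝ) 1, q t y = 0 := by
      intro y hy
      have := zero_of_integral_zero (fun s => q t s ^ 2) ((hcq t).pow 2)
        (fun s => sq_nonneg _) hq2 y hy
      exact pow_eq_zero_iff two_ne_zero |>.1 this
    have hvz : ∀ y ∈ Set.Icc (0:ℝ) 1, v t y = 0 := by
      intro y hy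
      have := zero_of_integral_zero (fun s => v t s ^ 2) ((hcv t).pow 2)
        (fun s => sq_nonneg _) hv2 y hy
      exact pow_eq_zero_iff two_ne_zero |>.1 this
    have hwz : w t z = 0 := by
      have hftc := hw_ftc t z
      rw [hw0 t ht] at hftc
      have hint0 : (∫ s in (0:ℝ)..z, q t s) = 0 := by
        rw [intervalIntegral.integral_congr (g := fun _ => (0:ℝ)) (fun s hs => by
          rw [Set.uIcc_of_le hz.1] at hs
          exact hqz s ⟨hs.1, le_trans hs.2 hz.2⟩)]
        simp
      linarith [hftc, hint0]
    exact ⟨hwz, hvz z hz, hqz z hz⟩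
  constructor
  · refine ⟨1, one_pos, fun t ht => ?_⟩
    have hE0 : ∀ t' ∈ Set.Ico (0:ℝ) T, E t' = 0 := by
      intro t' ht'
      have hv0 : (∫ z in (0:ℝ)..1, (v t' z) ^ 2) = 0 := by
        rw [intervalIntegral.integral_congr (g := fun _ => (0:ℝ))
          (fun z hz => by
            rw [uIcc_of_le (zero_le_one' ℝ)] at hz
            simp [(huniq t' ht' z hz).2.1])]
        simp
      have hq0 : (∫ z in (0:ℝ)..1, (q t' z) ^ 2) = 0 := by
        have : ∀ z ∈ Set.Icc (0:ℝ) 1, q t' z = 0 := fun z hz => (huniq t' ht' z hz).2.2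
        rw [intervalIntegral.integral_congr (g := fun _ => (0:ℝ))
          (fun z hz => by
            rw [uIcc_of_le (zero_le_one' ℝ)] at hz
            simp [this z hz])]
        simp
      simp only [hEalt]; rw [hv0, hq0, add_zero]
    have hmin : IsLocalMin E t := by
      have : ∀ t', E t ≤ E t' := fun t' => (hE0 t ht) ▸ hEnn t'
      exact Filter.Eventually.of_forall this
    have hd0 : deriv E t = 0 := hmin.deriv_eq_zero
    have hrhs : E t = 0 := hE0 t ht
    calc deriv (fun t' =>
        (∫ z in (0:ℝ)..1, (deriv (fun z' => W₁ t' z' - W₂ t' z') z) ^ 2)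
          + ∫ z in (0:ℝ)..1, (V₁ t' z - V₂ t' z) ^ 2) t = deriv E t := rfl
      _ = 0 := hd0
      _ ≤ 1 * (H2norm (fun z => (W₁ t z + W₂ t z) / 2)
              + H1norm (fun z => (V₁ t z + V₂ t z) / 2)) *
          ((∫ z in (0:ℝ)..1, (deriv (fun z' => W₁ t z' - W₂ t z') z) ^ 2)
            + ∫ z in (0:ℝ)..1, (V₁ t z - V₂ t z) ^ 2) := by
          have : ((∫ z in (0:ℝ)..1, (deriv (fun z' => W₁ t z' - W₂ t z') z) ^ 2)
            + ∫ z in (0:ℝ)..1, (V₁ t z - V₂ t z) ^ 2) = E t := rfl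
          rw [this, hrhs, mul_zero]
  · intro t ht z hz
    have h := huniq t ht z hz
    constructor
    · have := h.1; simp only [hw] at this; linarith
    · have := h.2.1; simp only [hv] at this; linarith
end
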